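/- arXiv:1103.1409 — 10 statements merged into one kernel-verified Lean document; each statement's English description precedes it below -/
import Mathlib

section
/- Let n, p ∈ ℕ and A, B ∈ ℝ^{p×n}. Then: (a) ⟨Bᵀu, Aᵀu⟩ > 0 for every nonzero u ∈ V₊(BAᵀ); (b) ⟨Bᵀu, Aᵀu⟩ ≥ 0 for every u ∈ V₊(BAᵀ) + V₀(BAᵀ); (c) ⟨Bᵀu, −Aᵀu⟩ > 0 for every nonzero u ∈ V₋(BAᵀ); (d) ⟨Bᵀu, −Aᵀu⟩ ≥ 0 for every u ∈ V₋(BAᵀ) + V₀(BAᵀ). Consequently the set {(Bᵀu, Aᵀu) : u ∈ V₊(BAᵀ) + V₀(BAᵀ)} is a monotone subset of ℝⁿ × ℝⁿ and the set {(Bᵀu, −Aᵀu) : u ∈ V₋(BAᵀ) + V₀(BAᵀ)} is a monotone subset of ℝⁿ × ℝⁿ. -/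
open Matrix Pointwise

/-- Sum of the eigenspaces of `M + Mᵀ` corresponding to positive eigenvalues. -/
noncomputable def Vpos {m : ℕ} (M : Matrix (Fin m) (Fin m) ℝ) :
    Submodule ℝ (Fin m → ℝ) :=
  ⨆ μ : {t : ℝ // 0 < t}, Module.End.eigenspace (Matrix.mulVecLin (M + Mᵀ)) (μ : ℝ)

/-- Eigenspace of `M + Mᵀ` for the eigenvalue `0`. -/
noncomputable def Vzero {m : ℕ} (M : Matrix (Fin m) (Fin m) ℝ) :
    Submodule ℝ (Fin m → ℝ) :=
  Module.End.eigenspace (Matrix.mulVecLin (M + Mᵀ)) 0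

/-- Sum of the eigenspaces of `M + Mᵀ` corresponding to negative eigenvalues. -/
noncomputable def Vneg {m : ℕ} (M : Matrix (Fin m) (Fin m) ℝ) :
    Submodule ℝ (Fin m → ℝ) :=
  ⨆ μ : {t : ℝ // t < 0}, Module.End.eigenspace (Matrix.mulVecLin (M + Mᵀ)) (μ : ℝ)

/-- A set `S ⊆ ℝⁿ × ℝⁿ` is monotone. -/
def IsMonotoneSet {n : ℕ} (S : Set ((Fin n → ℝ) × (Fin n → ℝ))) : Prop :=
  ∀ a ∈ S, ∀ b ∈ S, 0 ≤ (a.1 - b.1) ⬝ᵥ (a.2 - b.2)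

/-- A set `S ⊆ ℝⁿ × ℝⁿ` is maximally monotone. -/
def IsMaxMonotoneSet {n : ℕ} (S : Set ((Fin n → ℝ) × (Fin n → ℝ))) : Prop :=
  IsMonotoneSet S ∧ ∀ a, (∀ b ∈ S, 0 ≤ (a.1 - b.1) ⬝ᵥ (a.2 - b.2)) → a ∈ S

/-- Graph of the adjoint relation: `(x, x*) ∈ gra T*` iff `(x*, -x) ⟂ gra T`. -/
def adjGraph {n : ℕ} (S : Set ((Fin n → ℝ) × (Fin n → ℝ))) :
    Set ((Fin n → ℝ) × (Fin n → ℝ)) :=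
  {q | ∀ s ∈ S, q.2 ⬝ᵥ s.1 - q.1 ⬝ᵥ s.2 = 0}

/-!
For `M = BAᵀ` and `S = M + Mᵀ` one has `⟨u, S u⟩ = 2 ⟨Bᵀu, Aᵀu⟩`. Eigenvectors of the symmetric
matrix `S` for distinct eigenvalues are orthogonal, so writing `u` in a sum of eigenspaces as
`∑ u_μ` gives `⟨u, S u⟩ = ∑ μ ⟨u_μ, u_μ⟩`, whose sign is that of the eigenvalues involved.
Monotonicity is nonnegativity applied to differences `u - v`, which stay in the subspace.
-/

namespace Module.End

variable {R M : Type*} [CommRing R] [AddCommGroup M] [Module R M] {f : Module.End R M}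

lemma eigenspace_neg_neg (μ : R) : eigenspace (-f) (-μ) = eigenspace f μ := by
  ext x
  simp only [mem_eigenspace_iff, LinearMap.neg_apply, neg_smul, neg_inj]

lemma iSup_eigenspace_le_iSup_eigenspace_neg (P : R → Prop) :
    ⨆ μ : {t // P t}, eigenspace f μ ≤ ⨆ μ : {t // P (-t)}, eigenspace (-f) μ :=
  iSup_le fun μ => le_iSup_of_le ⟨-μ, by simpa using μ.2⟩ (eigenspace_neg_neg (μ : R)).ge

lemma iSup_eigenspace_sup_eigenspace_le {P Q : R → Prop} {ν : R} (hPQ : ∀ μ, P μ → Q μ)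
    (hν : Q ν) :
    (⨆ μ : {t // P t}, eigenspace f μ) ⊔ eigenspace f ν ≤ ⨆ μ : {t // Q t}, eigenspace f μ :=
  sup_le (iSup_le fun μ => le_iSup_of_le ⟨μ, hPQ _ μ.2⟩ le_rfl) (le_iSup_of_le ⟨ν, hν⟩ le_rfl)

end Module.End

namespace Matrix

open Module.End

section CommRing

variable {ι κ R : Type*} [Fintype ι] [Fintype κ] [CommRing R]

lemma dotProduct_add_transpose_mulVec (M : Matrix ι ι R) (u : ι → R) :
    u ⬝ᵥ ((M + Mᵀ) *ᵥ u) = 2 * (u ⬝ᵥ (M *ᵥ u)) := by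
  rw [add_mulVec, dotProduct_add, dotProduct_mulVec u Mᵀ, vecMul_transpose, dotProduct_comm]
  ring

lemma dotProduct_mul_transpose_mulVec (A B : Matrix κ ι R) (u : κ → R) :
    u ⬝ᵥ ((B * Aᵀ) *ᵥ u) = (Bᵀ *ᵥ u) ⬝ᵥ (Aᵀ *ᵥ u) := by
  rw [← mulVec_mulVec, dotProduct_mulVec, ← mulVec_transpose]

lemma mulVecLin_neg (S : Matrix ι ι R) : (-S).mulVecLin = -S.mulVecLin := by
  ext x : 1
  exact neg_mulVec x S

lemma IsSymm.mulVec_dotProduct {S : Matrix ι ι R} (hS : S.IsSymm) (x y : ι → R) :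
    (S *ᵥ x) ⬝ᵥ y = x ⬝ᵥ (S *ᵥ y) := by
  rw [dotProduct_mulVec, ← vecMul_transpose, hS.eq]

lemma IsSymm.dotProduct_eq_zero_of_mem_eigenspace [NoZeroDivisors R] {S : Matrix ι ι R}
    (hS : S.IsSymm) {μ ν : R} (hμν : μ ≠ ν) {x y : ι → R}
    (hx : x ∈ eigenspace S.mulVecLin μ) (hy : y ∈ eigenspace S.mulVecLin ν) :
    x ⬝ᵥ y = 0 := by
  rw [mem_eigenspace_iff, mulVecLin_apply] at hx hy
  have h : μ * (x ⬝ᵥ y) = ν * (x ⬝ᵥ y) := by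
    rw [← smul_eq_mul, ← smul_dotProduct, ← hx, hS.mulVec_dotProduct, hy, dotProduct_smul,
      smul_eq_mul]
  have h' : (μ - ν) * (x ⬝ᵥ y) = 0 := by linear_combination h
  exact (mul_eq_zero.mp h').resolve_left (sub_ne_zero.mpr hμν)

lemma IsSymm.exists_dotProduct_mulVec_eq_sum [NoZeroDivisors R] {S : Matrix ι ι R}
    (hS : S.IsSymm) {P : R → Prop} {u : ι → R}
    (hu : u ∈ ⨆ μ : {t // P t}, eigenspace S.mulVecLin μ) :
    ∃ f : {t // P t} →₀ (ι → R), (f.sum fun _ x => x) = u ∧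
      u ⬝ᵥ (S *ᵥ u) = f.sum fun μ x => μ * (x ⬝ᵥ x) := by
  obtain ⟨f, hf, rfl⟩ := (Submodule.mem_iSup_iff_exists_finsupp _ _).mp hu
  refine ⟨f, rfl, ?_⟩
  have heig (μ : {t // P t}) : S *ᵥ f μ = (μ : R) • f μ := by
    simpa only [mem_eigenspace_iff, mulVecLin_apply] using hf μ
  simp only [Finsupp.sum, mulVec_sum, dotProduct_sum, sum_dotProduct, heig, dotProduct_smul,
    smul_eq_mul]
  refine Finset.sum_congr rfl fun μ hμ => congrArg _ <| Finset.sum_eq_single_of_mem μ hμ ?_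
  exact fun ν _ hνμ => hS.dotProduct_eq_zero_of_mem_eigenspace (Subtype.coe_injective.ne hνμ)
    (hf ν) (hf μ)

end CommRing

section LinearOrder

variable {ι R : Type*} [Fintype ι] [CommRing R] [LinearOrder R] [IsStrictOrderedRing R]

lemma dotProduct_self_nonneg (v : ι → R) : 0 ≤ v ⬝ᵥ v :=
  Fintype.sum_nonneg fun i => mul_self_nonneg (v i)

lemma dotProduct_self_pos {v : ι → R} (hv : v ≠ 0) : 0 < v ⬝ᵥ v :=
  (dotProduct_self_nonneg v).lt_of_ne' (dotProduct_self_eq_zero.not.mpr hv)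

variable {S : Matrix ι ι R} {P : R → Prop} {u : ι → R}

lemma IsSymm.dotProduct_mulVec_nonneg_of_mem_iSup_eigenspace (hS : S.IsSymm)
    (hP : ∀ μ, P μ → 0 ≤ μ) (hu : u ∈ ⨆ μ : {t // P t}, eigenspace S.mulVecLin μ) :
    0 ≤ u ⬝ᵥ (S *ᵥ u) := by
  obtain ⟨f, -, hf⟩ := hS.exists_dotProduct_mulVec_eq_sum hu
  rw [hf]
  exact Finset.sum_nonneg fun μ _ => mul_nonneg (hP μ μ.2) (dotProduct_self_nonneg _)

lemma IsSymm.dotProduct_mulVec_pos_of_mem_iSup_eigenspace (hS : S.IsSymm)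
    (hP : ∀ μ, P μ → 0 < μ) (hu : u ∈ ⨆ μ : {t // P t}, eigenspace S.mulVecLin μ)
    (hu0 : u ≠ 0) : 0 < u ⬝ᵥ (S *ᵥ u) := by
  obtain ⟨f, hsum, hf⟩ := hS.exists_dotProduct_mulVec_eq_sum hu
  rw [hf]
  have hf0 : f ≠ 0 := by
    rintro rfl
    exact hu0 (by simpa using hsum.symm)
  obtain ⟨μ, hμ⟩ := Finsupp.support_nonempty_iff.mpr hf0
  refine Finset.sum_pos' (fun ν _ => mul_nonneg (hP ν ν.2).le (dotProduct_self_nonneg _))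
    ⟨μ, hμ, mul_pos (hP μ μ.2) (dotProduct_self_pos (Finsupp.mem_support_iff.mp hμ))⟩

lemma IsSymm.dotProduct_mulVec_nonpos_of_mem_iSup_eigenspace (hS : S.IsSymm)
    (hP : ∀ μ, P μ → μ ≤ 0) (hu : u ∈ ⨆ μ : {t // P t}, eigenspace S.mulVecLin μ) :
    u ⬝ᵥ (S *ᵥ u) ≤ 0 := by
  have hu' := iSup_eigenspace_le_iSup_eigenspace_neg P hu
  rw [← mulVecLin_neg] at hu'
  have h := hS.neg.dotProduct_mulVec_nonneg_of_mem_iSup_eigenspace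
    (fun μ hμ => neg_nonpos.mp (hP _ hμ)) hu'
  rwa [neg_mulVec, dotProduct_neg, neg_nonneg] at h

lemma IsSymm.dotProduct_mulVec_neg_of_mem_iSup_eigenspace (hS : S.IsSymm)
    (hP : ∀ μ, P μ → μ < 0) (hu : u ∈ ⨆ μ : {t // P t}, eigenspace S.mulVecLin μ)
    (hu0 : u ≠ 0) : u ⬝ᵥ (S *ᵥ u) < 0 := by
  have hu' := iSup_eigenspace_le_iSup_eigenspace_neg P hu
  rw [← mulVecLin_neg] at hu'
  have h := hS.neg.dotProduct_mulVec_pos_of_mem_iSup_eigenspace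
    (fun μ hμ => neg_lt_zero.mp (hP _ hμ)) hu' hu0
  rwa [neg_mulVec, dotProduct_neg, neg_pos] at h

end LinearOrder

end Matrix

lemma Vpos_sup_Vzero_le {m : ℕ} (M : Matrix (Fin m) (Fin m) ℝ) :
    Vpos M ⊔ Vzero M ≤ ⨆ μ : {t : ℝ // 0 ≤ t}, Module.End.eigenspace (M + Mᵀ).mulVecLin μ :=
  Module.End.iSup_eigenspace_sup_eigenspace_le (fun _ => le_of_lt) le_rfl

lemma Vneg_sup_Vzero_le {m : ℕ} (M : Matrix (Fin m) (Fin m) ℝ) :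
    Vneg M ⊔ Vzero M ≤ ⨆ μ : {t : ℝ // t ≤ 0}, Module.End.eigenspace (M + Mᵀ).mulVecLin μ :=
  Module.End.iSup_eigenspace_sup_eigenspace_le (fun _ => le_of_lt) le_rfl

lemma isMonotoneSet_image_of_dotProduct_nonneg {E : Type*} [AddCommGroup E] [Module ℝ E] {n : ℕ}
    (F G : E →ₗ[ℝ] (Fin n → ℝ)) {V : Submodule ℝ E} (h : ∀ u ∈ V, 0 ≤ F u ⬝ᵥ G u) :
    IsMonotoneSet ((fun u => (F u, G u)) '' V) := by
  rintro _ ⟨u, hu, rfl⟩ _ ⟨v, hv, rfl⟩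
  simpa only [map_sub] using h (u - v) (sub_mem hu hv)

/-- sign properties of `⟨Bᵀu, ±Aᵀu⟩` on the eigenspace sums of `BAᵀ`,
and monotonicity of the corresponding subsets of `ℝⁿ × ℝⁿ`. -/
theorem stmt2 {n p : ℕ} (A B : Matrix (Fin p) (Fin n) ℝ) :
    (∀ u ∈ Vpos (B * Aᵀ), u ≠ 0 → 0 < (Bᵀ *ᵥ u) ⬝ᵥ (Aᵀ *ᵥ u)) ∧
    (∀ u ∈ Vpos (B * Aᵀ) ⊔ Vzero (B * Aᵀ), 0 ≤ (Bᵀ *ᵥ u) ⬝ᵥ (Aᵀ *ᵥ u)) ∧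
    (∀ u ∈ Vneg (B * Aᵀ), u ≠ 0 → 0 < (Bᵀ *ᵥ u) ⬝ᵥ (-(Aᵀ *ᵥ u))) ∧
    (∀ u ∈ Vneg (B * Aᵀ) ⊔ Vzero (B * Aᵀ), 0 ≤ (Bᵀ *ᵥ u) ⬝ᵥ (-(Aᵀ *ᵥ u))) ∧
    IsMonotoneSet ((fun u => (Bᵀ *ᵥ u, Aᵀ *ᵥ u)) ''
      ↑(Vpos (B * Aᵀ) ⊔ Vzero (B * Aᵀ))) ∧
    IsMonotoneSet ((fun u => (Bᵀ *ᵥ u, -(Aᵀ *ᵥ u))) ''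
      ↑(Vneg (B * Aᵀ) ⊔ Vzero (B * Aᵀ))) := by
  set S := B * Aᵀ + (B * Aᵀ)ᵀ
  have hS : S.IsSymm := isSymm_add_transpose_self _
  have hq (u : Fin p → ℝ) : u ⬝ᵥ (S *ᵥ u) = 2 * ((Bᵀ *ᵥ u) ⬝ᵥ (Aᵀ *ᵥ u)) := by
    rw [dotProduct_add_transpose_mulVec, dotProduct_mul_transpose_mulVec]
  have hb : ∀ u ∈ Vpos (B * Aᵀ) ⊔ Vzero (B * Aᵀ), 0 ≤ (Bᵀ *ᵥ u) ⬝ᵥ (Aᵀ *ᵥ u) := fun u hu => by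
    have hu' := Vpos_sup_Vzero_le _ hu
    linarith [hq u, hS.dotProduct_mulVec_nonneg_of_mem_iSup_eigenspace (fun _ => id) hu']
  have hd : ∀ u ∈ Vneg (B * Aᵀ) ⊔ Vzero (B * Aᵀ), 0 ≤ (Bᵀ *ᵥ u) ⬝ᵥ -(Aᵀ *ᵥ u) := fun u hu => by
    have hu' := Vneg_sup_Vzero_le _ hu
    rw [dotProduct_neg]
    linarith [hq u, hS.dotProduct_mulVec_nonpos_of_mem_iSup_eigenspace (fun _ => id) hu']
  refine ⟨fun u hu hu0 => ?_, hb, fun u hu hu0 => ?_, hd,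
    isMonotoneSet_image_of_dotProduct_nonneg Bᵀ.mulVecLin Aᵀ.mulVecLin hb,
    isMonotoneSet_image_of_dotProduct_nonneg Bᵀ.mulVecLin (-Aᵀ.mulVecLin) hd⟩
  · linarith [hq u, hS.dotProduct_mulVec_pos_of_mem_iSup_eigenspace (fun _ => id) hu hu0]
  · rw [dotProduct_neg]
    linarith [hq u, hS.dotProduct_mulVec_neg_of_mem_iSup_eigenspace (fun _ => id) hu hu0]
end

section
/- Let n, p ∈ ℕ, let A, B ∈ ℝ^{p×n}, assume the p×2n matrix (A B) has rank p, and let G be the linear relation with graph gra G = {(x,x*) ∈ ℝⁿ × ℝⁿ : Ax + Bx* = 0}. Then the adjoint G* is monotone if and only if the symmetric p×p matrix ABᵀ + BAᵀ is negative semidefinite. -/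
/-!
The graph of `G` is the kernel of `(A B)`, so its annihilator is the row space of `(A B)`, and
`gra G* = {(-Bᵀy, Aᵀy) : y ∈ ℝᵖ}`. Since this graph is a linear subspace, `G*` is monotone iff
`⟪-Bᵀy, Aᵀy⟫ ≥ 0` for all `y`, and `2⟪-Bᵀy, Aᵀy⟫ = -yᵀ(ABᵀ + BAᵀ)y`.
-/

open Matrix Pointwise

theorem Matrix.exists_transpose_mulVec_eq_of_dotProduct_eq_zero {K l m : Type*} [Field K]
    [Fintype l] [Fintype m] (M : Matrix l m K) {x : m → K}
    (hx : ∀ v, M *ᵥ v = 0 → x ⬝ᵥ v = 0) : ∃ y, Mᵀ *ᵥ y = x := by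
  classical
  have hx' : dotProductEquiv K m x ∈ (LinearMap.ker M.mulVecLin).dualAnnihilator :=
    (Submodule.mem_dualAnnihilator _).mpr fun v hv => hx v hv
  obtain ⟨ψ, hψ⟩ := (LinearMap.range_dualMap_eq_dualAnnihilator_ker _).ge hx'
  refine ⟨(dotProductEquiv K l).symm ψ, dotProduct_eq_iff.mp fun u => ?_⟩
  have hψu : ψ (M *ᵥ u) = x ⬝ᵥ u := LinearMap.congr_fun hψ u
  rw [mulVec_transpose, ← dotProduct_mulVec, ← hψu, ← dotProductEquiv_apply_apply,
    LinearEquiv.apply_symm_apply]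

theorem isMonotoneSet_range_linearMap_iff {n : ℕ} {V : Type*} [AddCommGroup V] [Module ℝ V]
    (f : V →ₗ[ℝ] (Fin n → ℝ) × (Fin n → ℝ)) :
    IsMonotoneSet (Set.range f) ↔ ∀ v, 0 ≤ (f v).1 ⬝ᵥ (f v).2 := by
  constructor
  · intro hf v
    simpa using hf (f v) ⟨v, rfl⟩ (f 0) ⟨0, rfl⟩
  · rintro hf _ ⟨u, rfl⟩ _ ⟨v, rfl⟩
    simpa using hf (u - v)

theorem adjGraph_setOf_mulVec_add_mulVec_eq_zero {n : ℕ} {ι : Type*} [Fintype ι]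
    (A B : Matrix ι (Fin n) ℝ) :
    adjGraph {q : (Fin n → ℝ) × (Fin n → ℝ) | A *ᵥ q.1 + B *ᵥ q.2 = 0} =
      Set.range ((-Bᵀ).mulVecLin.prod Aᵀ.mulVecLin) := by
  ext ⟨x, xs⟩
  simp only [adjGraph, Set.mem_ofPred_eq, Set.mem_range, LinearMap.prod_apply,
    Function.prod_apply, mulVecLin_apply, Prod.mk.injEq, Prod.forall, neg_mulVec]
  constructor
  · intro hq
    have hker : ∀ v, fromCols A B *ᵥ v = 0 → Sum.elim xs (-x) ⬝ᵥ v = 0 := by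
      intro v hv
      rw [← Sum.elim_comp_inl_inr v, fromCols_mulVec_sumElim] at hv
      rw [← Sum.elim_comp_inl_inr v, sumElim_dotProduct_sumElim, neg_dotProduct,
        ← sub_eq_add_neg]
      exact hq _ _ hv
    obtain ⟨y, hy⟩ := (fromCols A B).exists_transpose_mulVec_eq_of_dotProduct_eq_zero hker
    rw [transpose_fromCols, fromRows_mulVec, Sum.elim_eq_iff] at hy
    exact ⟨y, neg_eq_iff_eq_neg.mpr hy.2, hy.1⟩
  · rintro ⟨y, rfl, rfl⟩ s s' hs
    rw [neg_dotProduct, sub_neg_eq_add, mulVec_transpose, mulVec_transpose,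
      ← dotProduct_mulVec, ← dotProduct_mulVec, ← dotProduct_add, hs, dotProduct_zero]

theorem dotProduct_neg_mul_transpose_add_mulVec {R ι κ : Type*} [CommRing R] [Fintype ι]
    [Fintype κ] (A B : Matrix ι κ R) (u : ι → R) :
    u ⬝ᵥ (-(A * Bᵀ + B * Aᵀ)) *ᵥ u = 2 * ((-Bᵀ *ᵥ u) ⬝ᵥ (Aᵀ *ᵥ u)) := by
  have hAB : u ⬝ᵥ (A * Bᵀ) *ᵥ u = (Aᵀ *ᵥ u) ⬝ᵥ (Bᵀ *ᵥ u) := by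
    rw [← mulVec_mulVec, dotProduct_mulVec, ← mulVec_transpose]
  have hBA : u ⬝ᵥ (B * Aᵀ) *ᵥ u = (Bᵀ *ᵥ u) ⬝ᵥ (Aᵀ *ᵥ u) := by
    rw [← mulVec_mulVec, dotProduct_mulVec, ← mulVec_transpose]
  rw [neg_mulVec, dotProduct_neg, add_mulVec, dotProduct_add, hAB, hBA, neg_mulVec,
    neg_dotProduct, dotProduct_comm]
  ring

theorem stmt6_general {n p : ℕ} (A B : Matrix (Fin p) (Fin n) ℝ) :
    IsMonotoneSet
        (adjGraph {q : (Fin n → ℝ) × (Fin n → ℝ) | A *ᵥ q.1 + B *ᵥ q.2 = 0}) ↔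
      (-(A * Bᵀ + B * Aᵀ)).PosSemidef := by
  have hsymm : (-(A * Bᵀ + B * Aᵀ)).IsHermitian := by
    simp [IsHermitian, transpose_add, transpose_mul, add_comm]
  rw [adjGraph_setOf_mulVec_add_mulVec_eq_zero, isMonotoneSet_range_linearMap_iff,
    posSemidef_iff_dotProduct_mulVec, and_iff_right hsymm]
  refine forall_congr' fun u => ?_
  rw [star_trivial, dotProduct_neg_mul_transpose_add_mulVec, mul_nonneg_iff_of_pos_left two_pos]
  rfl

/-- if `(A B)` has rank `p` and `gra G = {(x,x*) : Ax + Bx* = 0}`,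
then `G*` is monotone iff `ABᵀ + BAᵀ` is negative semidefinite. -/
theorem stmt6 {n p : ℕ} (A B : Matrix (Fin p) (Fin n) ℝ)
    (hrank : (Matrix.fromCols A B).rank = p) :
    IsMonotoneSet
        (adjGraph {q : (Fin n → ℝ) × (Fin n → ℝ) | A *ᵥ q.1 + B *ᵥ q.2 = 0}) ↔
      (-(A * Bᵀ + B * Aᵀ)).PosSemidef :=
  stmt6_general A B
end

section
/- Let n, p ∈ ℕ, let A, B ∈ ℝ^{p×n}, assume the p×2n matrix (A B) has rank p, and let G be the linear relation with graph gra G = {(x,x*) ∈ ℝⁿ × ℝⁿ : Ax + Bx* = 0}. If G is monotone, then n ≤ p. Moreover, assuming G is monotone, G is maximally monotone if and only if dim(gra G) = n and p = n. -/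
/-! On a monotone linear relation `G` the map `(x, x*) ↦ x + x*` is injective: `x + x* = 0` gives
`0 ≤ ⟨x, x*⟩ = -‖x‖²`. Hence `dim gra G ≤ n`, while rank–nullity gives `dim gra G = 2n - p`, so
`n ≤ p`. Maximality is equivalent to this map being onto `ℝⁿ`. If it is onto and `(x, x*)` is
monotonically related to `G`, choose `(y, y*) ∈ G` with `y + y* = x + x*`; then
`0 ≤ ⟨x - y, x* - y*⟩ = -‖x - y‖²`, so `(x, x*) = (y, y*)`. If it is not onto, a nonzero `v`
orthogonal to its image makes `(v, v)` monotonically related to `G`, although `(v, v) ∉ G`. -/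

open Matrix Pointwise

lemma eq_zero_of_nonneg_dotProduct_neg_self {m R : Type*} [Fintype m] [Ring R] [LinearOrder R]
    [IsStrictOrderedRing R] {v : m → R} (h : 0 ≤ v ⬝ᵥ -v) : v = 0 := by
  have hle : v ⬝ᵥ v ≤ 0 := by rwa [dotProduct_neg, neg_nonneg] at h
  exact dotProduct_self_eq_zero.mp <|
    hle.antisymm <| Finset.sum_nonneg fun i _ => mul_self_nonneg (v i)

lemma Prod.eq_of_add_eq_of_dotProduct_sub_nonneg {m R : Type*} [Fintype m] [Ring R]
    [LinearOrder R] [IsStrictOrderedRing R] {a b : (m → R) × (m → R)} (hsum : a.1 + a.2 = b.1 + b.2)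
    (hmono : 0 ≤ (a.1 - b.1) ⬝ᵥ (a.2 - b.2)) : a = b := by
  have h2 : a.2 - b.2 = -(a.1 - b.1) := by
    rw [neg_sub, sub_eq_sub_iff_add_eq_add, add_comm, hsum, add_comm]
  rw [h2] at hmono
  have h1 : a.1 = b.1 := sub_eq_zero.mp (eq_zero_of_nonneg_dotProduct_neg_self hmono)
  exact Prod.ext h1 (add_left_cancel (h1 ▸ hsum))

lemma exists_ne_zero_forall_dotProduct_eq_zero {m K : Type*} [Fintype m] [DecidableEq m]
    [Field K] {M : Submodule K (m → K)} (hM : M ≠ ⊤) : ∃ v ≠ 0, ∀ w ∈ M, w ⬝ᵥ v = 0 := by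
  obtain ⟨f, hf, hfM⟩ := M.exists_dual_map_eq_bot_of_lt_top hM.lt_top inferInstance
  have hfv : ∀ w, f w = w ⬝ᵥ fun i => f (Pi.single i 1) := by
    intro w
    conv_lhs => rw [← (Pi.basisFun K m).sum_repr w]
    simp [dotProduct]
  refine ⟨fun i => f (Pi.single i 1), fun hv => hf (LinearMap.ext fun w => ?_), fun w hw => ?_⟩
  · rw [hfv, hv, dotProduct_zero, LinearMap.zero_apply]
  · rw [← hfv]
    exact LinearMap.le_ker_iff_map.mpr hfM hw

def Submodule.sumMap {R M : Type*} [Semiring R] [AddCommMonoid M] [Module R M]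
    (G : Submodule R (M × M)) : G →ₗ[R] M :=
  (LinearMap.id.coprod LinearMap.id).domRestrict G

@[simp]
lemma Submodule.sumMap_apply {R M : Type*} [Semiring R] [AddCommMonoid M] [Module R M]
    (G : Submodule R (M × M)) (q : G) : G.sumMap q = (q : M × M).1 + (q : M × M).2 :=
  rfl

namespace IsMonotoneSet

variable {n : ℕ} {G : Submodule ℝ ((Fin n → ℝ) × (Fin n → ℝ))}

lemma dotProduct_nonneg (hG : IsMonotoneSet (G : Set ((Fin n → ℝ) × (Fin n → ℝ))))
    {q : (Fin n → ℝ) × (Fin n → ℝ)} (hq : q ∈ G) : 0 ≤ q.1 ⬝ᵥ q.2 := by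
  simpa using hG q hq 0 G.zero_mem

lemma injective_sumMap (hG : IsMonotoneSet (G : Set ((Fin n → ℝ) × (Fin n → ℝ)))) :
    Function.Injective G.sumMap := by
  refine (injective_iff_map_eq_zero _).mpr fun ⟨q, hq⟩ hq0 => ?_
  have : q = 0 := Prod.eq_of_add_eq_of_dotProduct_sub_nonneg (by simpa using hq0)
    (by simpa using hG.dotProduct_nonneg hq)
  simpa [Subtype.ext_iff] using this

lemma finrank_le (hG : IsMonotoneSet (G : Set ((Fin n → ℝ) × (Fin n → ℝ)))) :
    Module.finrank ℝ G ≤ n :=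
  (LinearMap.finrank_le_finrank_of_injective hG.injective_sumMap).trans_eq
    (Module.finrank_fin_fun ℝ)

lemma range_sumMap_eq_top_iff (hG : IsMonotoneSet (G : Set ((Fin n → ℝ) × (Fin n → ℝ)))) :
    LinearMap.range G.sumMap = ⊤ ↔ Module.finrank ℝ G = n := by
  rw [← LinearMap.finrank_range_of_inj hG.injective_sumMap]
  constructor
  · intro h
    rw [h, finrank_top, Module.finrank_fin_fun]
  · intro h
    exact Submodule.eq_top_of_finrank_eq (h.trans (Module.finrank_fin_fun ℝ).symm)

lemma isMaxMonotoneSet_of_range_sumMap_eq_top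
    (hG : IsMonotoneSet (G : Set ((Fin n → ℝ) × (Fin n → ℝ))))
    (hrange : LinearMap.range G.sumMap = ⊤) :
    IsMaxMonotoneSet (G : Set ((Fin n → ℝ) × (Fin n → ℝ))) := by
  refine ⟨hG, fun a ha => ?_⟩
  obtain ⟨⟨q, hq⟩, hsum⟩ : a.1 + a.2 ∈ LinearMap.range G.sumMap := hrange ▸ Submodule.mem_top
  rw [Prod.eq_of_add_eq_of_dotProduct_sub_nonneg hsum.symm (ha q hq)]
  exact hq

lemma range_sumMap_eq_top_of_isMaxMonotoneSet
    (hG : IsMaxMonotoneSet (G : Set ((Fin n → ℝ) × (Fin n → ℝ)))) :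
    LinearMap.range G.sumMap = ⊤ := by
  by_contra hne
  obtain ⟨v, hv0, hv⟩ := exists_ne_zero_forall_dotProduct_eq_zero hne
  have horth : ∀ b ∈ G, (b.1 + b.2) ⬝ᵥ v = 0 := fun b hb => hv _ ⟨⟨b, hb⟩, rfl⟩
  have hvv : ((v, v) : (Fin n → ℝ) × (Fin n → ℝ)) ∈ G := by
    refine hG.2 _ fun b hb => ?_
    have hexp : (v - b.1) ⬝ᵥ (v - b.2) = v ⬝ᵥ v - (b.1 + b.2) ⬝ᵥ v + b.1 ⬝ᵥ b.2 := by
      simp only [sub_dotProduct, dotProduct_sub, add_dotProduct, dotProduct_comm v b.2]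
      ring
    rw [hexp, horth b hb, sub_zero]
    exact add_nonneg (Finset.sum_nonneg fun i _ => mul_self_nonneg (v i))
      (hG.1.dotProduct_nonneg hb)
  have : v ⬝ᵥ v + v ⬝ᵥ v = 0 := by simpa [add_dotProduct] using horth _ hvv
  exact hv0 (dotProduct_self_eq_zero.mp (by linarith))

lemma isMaxMonotoneSet_iff_finrank_eq
    (hG : IsMonotoneSet (G : Set ((Fin n → ℝ) × (Fin n → ℝ)))) :
    IsMaxMonotoneSet (G : Set ((Fin n → ℝ) × (Fin n → ℝ))) ↔ Module.finrank ℝ G = n := by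
  rw [← hG.range_sumMap_eq_top_iff]
  exact ⟨range_sumMap_eq_top_of_isMaxMonotoneSet, hG.isMaxMonotoneSet_of_range_sumMap_eq_top⟩

end IsMonotoneSet

lemma Matrix.finrank_add_rank_fromCols {m ι K : Type*} [Fintype m] [Fintype ι] [Field K]
    (A B : Matrix m ι K) (G : Submodule K ((ι → K) × (ι → K)))
    (hG : (G : Set ((ι → K) × (ι → K))) = {q | A *ᵥ q.1 + B *ᵥ q.2 = 0}) :
    Module.finrank K G + (fromCols A B).rank = Fintype.card ι + Fintype.card ι := by
  set L := (fromCols A B).mulVecLin ∘ₗ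
    (LinearEquiv.sumArrowLequivProdArrow ι ι K K).symm.toLinearMap
  have hL : ∀ q, L q = A *ᵥ q.1 + B *ᵥ q.2 := fun q => by
    have hq : (LinearEquiv.sumArrowLequivProdArrow ι ι K K).symm q = Sum.elim q.1 q.2 := by
      funext i; cases i <;> rfl
    simp [L, hq]
  have hker : G = LinearMap.ker L := by
    ext q
    rw [← SetLike.mem_coe, hG, LinearMap.mem_ker, hL]
    rfl
  have hrange : LinearMap.range L = LinearMap.range (fromCols A B).mulVecLin :=
    LinearMap.range_comp_of_range_eq_top _ (LinearEquiv.range _)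
  have := L.finrank_range_add_finrank_ker
  rw [hrange, ← hker, Module.finrank_prod, Module.finrank_fintype_fun_eq_card] at this
  rw [Matrix.rank, ← this, add_comm]

/-- if `G` (with `gra G = {(x,x*) : Ax + Bx* = 0}` and `rank (A B) = p`)
is monotone then `n ≤ p`; moreover `G` is maximally monotone iff
`dim (gra G) = n` and `p = n`. -/
theorem stmt7 {n p : ℕ} (A B : Matrix (Fin p) (Fin n) ℝ)
    (hrank : (Matrix.fromCols A B).rank = p)
    (G : Submodule ℝ ((Fin n → ℝ) × (Fin n → ℝ)))
    (hG : (G : Set ((Fin n → ℝ) × (Fin n → ℝ))) =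
      {q : (Fin n → ℝ) × (Fin n → ℝ) | A *ᵥ q.1 + B *ᵥ q.2 = 0})
    (hmono : IsMonotoneSet (G : Set ((Fin n → ℝ) × (Fin n → ℝ)))) :
    n ≤ p ∧
    (IsMaxMonotoneSet (G : Set ((Fin n → ℝ) × (Fin n → ℝ))) ↔
      (Module.finrank ℝ G = n ∧ p = n)) := by
  have hdim := Matrix.finrank_add_rank_fromCols A B G hG
  rw [hrank, Fintype.card_fin] at hdim
  have hle := hmono.finrank_le
  refine ⟨by omega, ?_⟩
  rw [hmono.isMaxMonotoneSet_iff_finrank_eq]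
  omega
end

section
/- Let n, p ∈ ℕ, let A, B ∈ ℝ^{p×n}, assume the p×2n matrix (A B) has rank p, and let G be the linear relation with graph gra G = {(x,x*) ∈ ℝⁿ × ℝⁿ : Ax + Bx* = 0}. Let λ₁,…,λ_k > 0 ≥ λ_{k+1},…,λ_p be the eigenvalues of the symmetric p×p matrix ABᵀ + BAᵀ counted with multiplicity, let v₁,…,v_p be a corresponding orthonormal basis of ℝᵖ of eigenvectors, and let V_g be the (p−k)×p matrix whose rows are v_{k+1}ᵀ,…,v_pᵀ. Define G̃ by gra G̃ = {(x,x*) : V_g(Ax + Bx*) = 0}. Then gra G̃ = gra G + {(Bᵀu, Aᵀu) : u ∈ span{v₁,…,v_k}}. -/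
/-!
Write `M = ABᵀ + BAᵀ` and `U = span{v₁,…,v_k}`. Since `A(Bᵀu) + B(Aᵀu) = Mu`, a pair `q` lies in
`gra G + {(Bᵀu, Aᵀu) : u ∈ U}` exactly when `Aq₁ + Bq₂ ∈ M(U)`. Because the `λᵢ` with `i ≤ k` are
nonzero, `M(U) = U`; because `v` is an orthonormal basis, `U` is the kernel of `V_g`.
-/

open Matrix Pointwise

theorem Submodule.map_span_eigenvectors {K V ι : Type*} [Field K] [AddCommGroup V] [Module K V]
    {f : V →ₗ[K] V} {v : ι → V} {lam : ι → K} {s : Set ι}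
    (hv : ∀ i ∈ s, f (v i) = lam i • v i) (hlam : ∀ i ∈ s, lam i ≠ 0) :
    (Submodule.span K (v '' s)).map f = Submodule.span K (v '' s) := by
  apply le_antisymm
  · rw [Submodule.map_span, Submodule.span_le]
    rintro _ ⟨_, ⟨i, hi, rfl⟩, rfl⟩
    rw [hv i hi]
    exact Submodule.smul_mem _ _ (Submodule.subset_span ⟨i, hi, rfl⟩)
  · rw [Submodule.span_le]
    rintro _ ⟨i, hi, rfl⟩
    have hpre : f ((lam i)⁻¹ • v i) = v i := by
      rw [map_smul, hv i hi, smul_smul, inv_mul_cancel₀ (hlam i hi), one_smul]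
    rw [← hpre]
    exact Submodule.mem_map_of_mem (Submodule.smul_mem _ _ (Submodule.subset_span ⟨i, hi, rfl⟩))

theorem mem_span_image_of_orthonormal {ι R : Type*} [Fintype ι] [DecidableEq ι] [CommRing R]
    {v : ι → ι → R} (hnorm : ∀ i, v i ⬝ᵥ v i = 1) (horth : ∀ i j, i ≠ j → v i ⬝ᵥ v j = 0)
    {s : Set ι} {w : ι → R} (hw : ∀ i ∉ s, v i ⬝ᵥ w = 0) :
    w ∈ Submodule.span R (v '' s) := by
  have hVVt : of v * (of v)ᵀ = 1 := by
    ext i j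
    by_cases hij : i = j
    · subst hij; simpa [mul_apply, dotProduct] using hnorm i
    · simpa [hij, mul_apply, dotProduct] using horth i j hij
  have hexpand : w = ∑ i, (v i ⬝ᵥ w) • v i := by
    calc w = (of v)ᵀ *ᵥ (of v *ᵥ w) := by
          rw [mulVec_mulVec, mul_eq_one_comm.mp hVVt, one_mulVec]
      _ = ∑ i, (v i ⬝ᵥ w) • v i := by rw [mulVec_transpose, vecMul_eq_sum]; rfl
  rw [hexpand]
  refine Submodule.sum_mem _ fun i _ => ?_
  by_cases hi : i ∈ s
  · exact Submodule.smul_mem _ _ (Submodule.subset_span ⟨i, hi, rfl⟩)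
  · simp [hw i hi]

theorem ker_mulVecLin_eq_span_of_orthonormal {R : Type*} [CommRing R] {p k : ℕ}
    {v : Fin p → Fin p → R} (hnorm : ∀ i, v i ⬝ᵥ v i = 1)
    (horth : ∀ i j, i ≠ j → v i ⬝ᵥ v j = 0) {Vg : Matrix (Fin (p - k)) (Fin p) R}
    (hVg : ∀ (i : Fin (p - k)) (hi : k + (i : ℕ) < p), Vg i = v ⟨k + i, hi⟩) :
    LinearMap.ker Vg.mulVecLin = Submodule.span R (v '' {i | (i : ℕ) < k}) := by
  apply le_antisymm
  · intro w hw
    refine mem_span_image_of_orthonormal hnorm horth fun i hi => ?_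
    have hki : k ≤ (i : ℕ) := by simpa using hi
    have hrow := congrFun (LinearMap.mem_ker.mp hw) ⟨i - k, by omega⟩
    simpa [mulVec, hVg, Nat.add_sub_cancel' hki] using hrow
  · rw [Submodule.span_le]
    rintro _ ⟨i, hi, rfl⟩
    ext j
    rw [mulVecLin_apply, mulVec, hVg j (by have := j.isLt; omega)]
    exact horth _ _ (Fin.ne_of_val_ne (by simp at hi ⊢; omega))

theorem setOf_mem_map_eq_add_image {R m n : Type*} [CommRing R] [Fintype m] [Fintype n]
    (A B : Matrix m n R) (U : Submodule R (m → R)) :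
    {q : (n → R) × (n → R) | A *ᵥ q.1 + B *ᵥ q.2 ∈ U.map (A * Bᵀ + B * Aᵀ).mulVecLin} =
      {q : (n → R) × (n → R) | A *ᵥ q.1 + B *ᵥ q.2 = 0} +
        (fun u => (Bᵀ *ᵥ u, Aᵀ *ᵥ u)) '' U := by
  set L := A.mulVecLin.coprod B.mulVecLin
  set T := Bᵀ.mulVecLin.prod Aᵀ.mulVecLin
  have hLT : L ∘ₗ T = (A * Bᵀ + B * Aᵀ).mulVecLin := by
    ext u : 1
    simp [L, T]
  have hpreimage : (U.map (A * Bᵀ + B * Aᵀ).mulVecLin).comap L = LinearMap.ker L ⊔ U.map T := by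
    rw [← hLT, Submodule.map_comp, Submodule.comap_map_eq, sup_comm]
  exact (congrArg SetLike.coe hpreimage).trans (Submodule.coe_sup _ _)

/-- with eigenvalues of `ABᵀ + BAᵀ` ordered so that `λ₁,…,λ_k > 0 ≥ λ_{k+1},…,λ_p`,
an orthonormal eigenbasis `v`, and `V_g` the matrix with rows `v_{k+1}ᵀ,…,v_pᵀ`:
`{(x,x*) : V_g(Ax + Bx*) = 0} = gra G + {(Bᵀu, Aᵀu) : u ∈ span{v₁,…,v_k}}`. -/
theorem stmt9 {n p k : ℕ} (A B : Matrix (Fin p) (Fin n) ℝ)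
    (lam : Fin p → ℝ) (v : Fin p → (Fin p → ℝ))
    (hpos : ∀ i : Fin p, (i : ℕ) < k → 0 < lam i)
    (heig : ∀ i : Fin p, (A * Bᵀ + B * Aᵀ) *ᵥ v i = lam i • v i)
    (hnorm : ∀ i : Fin p, v i ⬝ᵥ v i = 1)
    (horth : ∀ i j : Fin p, i ≠ j → v i ⬝ᵥ v j = 0)
    (Vg : Matrix (Fin (p - k)) (Fin p) ℝ)
    (hVg : ∀ i : Fin (p - k), Vg i = v ⟨k + (i : ℕ), by have := i.2; omega⟩) :
    {q : (Fin n → ℝ) × (Fin n → ℝ) | Vg *ᵥ (A *ᵥ q.1 + B *ᵥ q.2) = 0} =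
      {q : (Fin n → ℝ) × (Fin n → ℝ) | A *ᵥ q.1 + B *ᵥ q.2 = 0} +
        ((fun u => (Bᵀ *ᵥ u, Aᵀ *ᵥ u)) ''
          ↑(Submodule.span ℝ {w : Fin p → ℝ | ∃ i : Fin p, (i : ℕ) < k ∧ w = v i})) := by
  have hspan : {w : Fin p → ℝ | ∃ i : Fin p, (i : ℕ) < k ∧ w = v i} = v '' {i | (i : ℕ) < k} := by
    ext w; simp [eq_comm]
  have hinvariant : (Submodule.span ℝ (v '' {i | (i : ℕ) < k})).map (A * Bᵀ + B * Aᵀ).mulVecLin =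
      Submodule.span ℝ (v '' {i | (i : ℕ) < k}) :=
    Submodule.map_span_eigenvectors (fun i _ => heig i) fun i hi => (hpos i hi).ne'
  rw [hspan, ← setOf_mem_map_eq_add_image, hinvariant,
    ← ker_mulVecLin_eq_span_of_orthonormal hnorm horth fun i _ => hVg i]
  rfl
end

section
/- Let n, p ∈ ℕ, let A, B ∈ ℝ^{p×n}, assume the p×2n matrix (A B) has rank p, and let G be the linear relation with graph gra G = {(x,x*) ∈ ℝⁿ × ℝⁿ : Ax + Bx* = 0}. Then G is monotone if and only if the symmetric p×p matrix ABᵀ + BAᵀ has exactly p − n positive eigenvalues counted with multiplicity (equivalently, dim V₊(BAᵀ) = p − n). -/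
open Matrix Pointwise

open Module Module.End

/-!
Write `K = gra G = ker (A B)`, of dimension `2n - p`, and `q(x, x*) = ⟨x, x*⟩`. Since `q` has
signature `(n, n)`, a subspace on which `q` is semidefinite has dimension at most `n`. The
injective map `u ↦ (Bᵀu, Aᵀu)` sends `ℝᵖ` into the `q`-orthogonal complement of `K` and pulls
`2q` back to `u ↦ uᵀ(ABᵀ + BAᵀ)u`.

If `q ≥ 0` on `K`, then `K` and the image of `V₊(BAᵀ)` span a `q`-nonnegative subspace, whence
`dim V₊ ≤ p - n`; the image of the nonpositive eigenspaces is `q`-nonpositive, whence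
`dim V₊ ≥ p - n`. Conversely, if `dim V₊ = p - n`, the nonpositive eigenspaces have dimension `n`,
and a `v ∈ K` with `q(v) < 0` would extend their image to a `q`-nonpositive subspace of
dimension `n + 1`.
-/

namespace LinearMap.IsSymmetric

variable {E : Type*} [NormedAddCommGroup E] [InnerProductSpace ℝ E] [FiniteDimensional ℝ E]
  {T : E →ₗ[ℝ] E}

section Eigenbasis

variable {m : ℕ} (hT : T.IsSymmetric) (hm : finrank ℝ E = m)

lemma inner_apply_self_eq_sum (v : E) :
    inner ℝ (T v) v = ∑ i, hT.eigenvalues hm i * (hT.eigenvectorBasis hm).repr v i ^ 2 := by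
  rw [← (hT.eigenvectorBasis hm).repr.inner_map_map, PiLp.inner_apply]
  refine Finset.sum_congr rfl fun i _ => ?_
  rw [hT.eigenvectorBasis_apply_self_apply, RCLike.inner_apply, conj_trivial,
    RCLike.ofReal_real_eq_id, id_eq]
  ring

lemma repr_eigenvectorBasis_eq_zero_of_mem_eigenspace {μ : ℝ} {v : E} (hv : v ∈ eigenspace T μ)
    {i : Fin m} (hi : hT.eigenvalues hm i ≠ μ) : (hT.eigenvectorBasis hm).repr v i = 0 := by
  have h := hT.eigenvectorBasis_apply_self_apply hm v i
  rw [mem_eigenspace_iff.mp hv, map_smul, PiLp.smul_apply, smul_eq_mul] at h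
  exact (mul_eq_mul_right_iff.mp h.symm).resolve_left (by simpa [eq_comm] using hi)

lemma repr_eigenvectorBasis_eq_zero_of_mem_iSup_eigenspace {P : ℝ → Prop} {v : E}
    (hv : v ∈ ⨆ μ : {t // P t}, eigenspace T μ) {i : Fin m} (hi : ¬ P (hT.eigenvalues hm i)) :
    (hT.eigenvectorBasis hm).repr v i = 0 := by
  induction hv using Submodule.iSup_induction' with
  | mem μ w hw =>
    exact hT.repr_eigenvectorBasis_eq_zero_of_mem_eigenspace hm hw fun h => hi (h ▸ μ.2)
  | zero => simp
  | add w w' _ _ hw hw' => simp [hw, hw']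

end Eigenbasis

lemma inner_apply_self_pos_of_mem_iSup_eigenspace (hT : T.IsSymmetric) {v : E}
    (hv : v ∈ ⨆ μ : {t : ℝ // 0 < t}, eigenspace T μ) (hv0 : v ≠ 0) :
    0 < inner ℝ (T v) v := by
  rw [hT.inner_apply_self_eq_sum rfl]
  have hzero : ∀ i, ¬ 0 < hT.eigenvalues rfl i → (hT.eigenvectorBasis rfl).repr v i = 0 :=
    fun i hi => hT.repr_eigenvectorBasis_eq_zero_of_mem_iSup_eigenspace rfl hv hi
  obtain ⟨j, hj⟩ : ∃ j, (hT.eigenvectorBasis rfl).repr v j ≠ 0 := by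
    by_contra! h
    exact hv0 ((hT.eigenvectorBasis rfl).repr.injective (by ext j; simp [h j]))
  refine Finset.sum_pos' (fun i _ => ?_) ⟨j, Finset.mem_univ j, ?_⟩
  · by_cases hi : 0 < hT.eigenvalues rfl i
    · positivity
    · simp [hzero i hi]
  · have hj_pos : 0 < hT.eigenvalues rfl j := not_not.mp (mt (hzero j) hj)
    positivity

lemma inner_apply_self_nonpos_of_mem_iSup_eigenspace (hT : T.IsSymmetric) {v : E}
    (hv : v ∈ ⨆ μ : {t : ℝ // ¬ 0 < t}, eigenspace T μ) :
    inner ℝ (T v) v ≤ 0 := by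
  rw [hT.inner_apply_self_eq_sum rfl]
  refine Finset.sum_nonpos fun i _ => ?_
  by_cases hi : 0 < hT.eigenvalues rfl i
  · simp [hT.repr_eigenvectorBasis_eq_zero_of_mem_iSup_eigenspace rfl hv (not_not.mpr hi)]
  · exact mul_nonpos_of_nonpos_of_nonneg (not_lt.mp hi) (sq_nonneg _)

lemma iSup_eigenspace_sup_iSup_eigenspace_not (hT : T.IsSymmetric) (P : ℝ → Prop) :
    (⨆ μ : {t // P t}, eigenspace T μ) ⊔ (⨆ μ : {t // ¬ P t}, eigenspace T μ) = ⊤ := by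
  refine eq_top_iff.mpr ?_
  rw [← Submodule.orthogonal_eq_bot_iff.mp hT.orthogonalComplement_iSup_eigenspaces_eq_bot]
  refine iSup_le fun μ => ?_
  by_cases hμ : P μ
  · exact le_sup_of_le_left (le_iSup_of_le ⟨μ, hμ⟩ le_rfl)
  · exact le_sup_of_le_right (le_iSup_of_le ⟨μ, hμ⟩ le_rfl)

end LinearMap.IsSymmetric

namespace Matrix

variable {𝕜 ι : Type*} [RCLike 𝕜] [Fintype ι] [DecidableEq ι]

lemma eigenspace_mulVecLin (C : Matrix ι ι 𝕜) (μ : 𝕜) :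
    eigenspace C.mulVecLin μ =
      (eigenspace (toEuclideanLin C) μ).map (WithLp.linearEquiv 2 𝕜 (ι → 𝕜)).toLinearMap := by
  ext u
  rw [Submodule.mem_map_equiv, mem_eigenspace_iff, mem_eigenspace_iff]
  exact (WithLp.toLp_injective 2).eq_iff.symm

lemma iSup_eigenspace_mulVecLin (C : Matrix ι ι 𝕜) (P : 𝕜 → Prop) :
    ⨆ μ : {t // P t}, eigenspace C.mulVecLin μ =
      (⨆ μ : {t // P t}, eigenspace (toEuclideanLin C) μ).map
        (WithLp.linearEquiv 2 𝕜 (ι → 𝕜)).toLinearMap := by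
  simp only [eigenspace_mulVecLin, Submodule.map_iSup]

lemma inner_toEuclideanLin_toLp_self (C : Matrix ι ι ℝ) (u : ι → ℝ) :
    inner ℝ (toEuclideanLin C (WithLp.toLp 2 u)) (WithLp.toLp 2 u) = u ⬝ᵥ C *ᵥ u := by
  simp [EuclideanSpace.inner_toLp_toLp]

namespace IsHermitian

variable {C : Matrix ι ι ℝ}

lemma dotProduct_mulVec_pos_of_mem_iSup_eigenspace (hC : C.IsHermitian) {u : ι → ℝ}
    (hu : u ∈ ⨆ μ : {t : ℝ // 0 < t}, eigenspace C.mulVecLin μ) (hu0 : u ≠ 0) :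
    0 < u ⬝ᵥ C *ᵥ u := by
  rw [iSup_eigenspace_mulVecLin, Submodule.mem_map_equiv] at hu
  rw [← inner_toEuclideanLin_toLp_self]
  exact (isSymmetric_toEuclideanLin_iff.mpr hC).inner_apply_self_pos_of_mem_iSup_eigenspace hu
    (by simpa using hu0)

lemma dotProduct_mulVec_nonpos_of_mem_iSup_eigenspace (hC : C.IsHermitian) {u : ι → ℝ}
    (hu : u ∈ ⨆ μ : {t : ℝ // ¬ 0 < t}, eigenspace C.mulVecLin μ) :
    u ⬝ᵥ C *ᵥ u ≤ 0 := by
  rw [iSup_eigenspace_mulVecLin, Submodule.mem_map_equiv] at hu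
  rw [← inner_toEuclideanLin_toLp_self]
  exact (isSymmetric_toEuclideanLin_iff.mpr hC).inner_apply_self_nonpos_of_mem_iSup_eigenspace hu

lemma iSup_eigenspace_sup_iSup_eigenspace_not (hC : C.IsHermitian) (P : ℝ → Prop) :
    (⨆ μ : {t // P t}, eigenspace C.mulVecLin μ) ⊔
      (⨆ μ : {t // ¬ P t}, eigenspace C.mulVecLin μ) = ⊤ := by
  rw [iSup_eigenspace_mulVecLin, iSup_eigenspace_mulVecLin, ← Submodule.map_sup,
    (isSymmetric_toEuclideanLin_iff.mpr hC).iSup_eigenspace_sup_iSup_eigenspace_not,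
    Submodule.map_top, LinearEquiv.range]

end IsHermitian

end Matrix

section DualPairing

variable {ι : Type*}

variable (ι) in
def negSnd : ((ι → ℝ) × (ι → ℝ)) ≃ₗ[ℝ] (ι → ℝ) × (ι → ℝ) :=
  (LinearEquiv.refl ℝ (ι → ℝ)).prodCongr (LinearEquiv.neg ℝ)

lemma mem_map_negSnd {W : Submodule ℝ ((ι → ℝ) × (ι → ℝ))} {w : (ι → ℝ) × (ι → ℝ)} :
    w ∈ W.map (negSnd ι).toLinearMap ↔ (w.1, -w.2) ∈ W := by
  rw [Submodule.mem_map_equiv]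
  rfl

variable [Fintype ι]

lemma finrank_le_of_forall_dotProduct_nonneg (W : Submodule ℝ ((ι → ℝ) × (ι → ℝ)))
    (hW : ∀ w ∈ W, 0 ≤ w.1 ⬝ᵥ w.2) : finrank ℝ W ≤ Fintype.card ι := by
  have hinj : Function.Injective ((LinearMap.id.coprod LinearMap.id).comp W.subtype) := by
    refine (injective_iff_map_eq_zero _).mpr fun w hw => ?_
    have hsnd : (w : (ι → ℝ) × (ι → ℝ)).2 = -(w : (ι → ℝ) × (ι → ℝ)).1 :=
      eq_neg_of_add_eq_zero_right hw
    have hfst : (w : (ι → ℝ) × (ι → ℝ)).1 = 0 := by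
      have := hW w w.2
      rw [hsnd, dotProduct_neg, neg_nonneg] at this
      exact dotProduct_self_eq_zero.mp
        (le_antisymm this (Fintype.sum_nonneg fun i => mul_self_nonneg _))
    exact Subtype.ext (Prod.ext hfst (by simp [hsnd, hfst]))
  simpa using LinearMap.finrank_le_finrank_of_injective hinj

lemma finrank_add_finrank_le_of_dotProduct_nonneg (W₁ W₂ : Submodule ℝ ((ι → ℝ) × (ι → ℝ)))
    (horth : ∀ v ∈ W₁, ∀ w ∈ W₂, v.1 ⬝ᵥ w.2 + w.1 ⬝ᵥ v.2 = 0)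
    (h₁ : ∀ v ∈ W₁, 0 ≤ v.1 ⬝ᵥ v.2) (h₂ : ∀ w ∈ W₂, w ≠ 0 → 0 < w.1 ⬝ᵥ w.2) :
    finrank ℝ W₁ + finrank ℝ W₂ ≤ Fintype.card ι := by
  have h₂' : ∀ w ∈ W₂, 0 ≤ w.1 ⬝ᵥ w.2 := fun w hw => by
    rcases eq_or_ne w 0 with rfl | hw0
    · simp
    · exact (h₂ w hw hw0).le
  have hinf : W₁ ⊓ W₂ = ⊥ := by
    refine (Submodule.eq_bot_iff _).mpr fun w ⟨hw₁, hw₂⟩ => ?_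
    by_contra hw0
    linarith [horth w hw₁ w hw₂, h₂ w hw₂ hw0]
  have hsup : ∀ u ∈ W₁ ⊔ W₂, 0 ≤ u.1 ⬝ᵥ u.2 := by
    intro u hu
    obtain ⟨v, hv, w, hw, rfl⟩ := Submodule.mem_sup.mp hu
    have hexp : (v + w).1 ⬝ᵥ (v + w).2 =
        v.1 ⬝ᵥ v.2 + (v.1 ⬝ᵥ w.2 + w.1 ⬝ᵥ v.2) + w.1 ⬝ᵥ w.2 := by
      simp only [Prod.fst_add, Prod.snd_add, add_dotProduct, dotProduct_add]
      ring
    rw [hexp, horth v hv w hw]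
    linarith [h₁ v hv, h₂' w hw]
  have := Submodule.finrank_sup_add_finrank_inf_eq W₁ W₂
  rw [hinf, finrank_bot] at this
  linarith [finrank_le_of_forall_dotProduct_nonneg _ hsup]

lemma finrank_le_of_forall_dotProduct_nonpos (W : Submodule ℝ ((ι → ℝ) × (ι → ℝ)))
    (hW : ∀ w ∈ W, w.1 ⬝ᵥ w.2 ≤ 0) : finrank ℝ W ≤ Fintype.card ι := by
  rw [← LinearEquiv.finrank_map_eq (negSnd ι)]
  refine finrank_le_of_forall_dotProduct_nonneg _ fun w hw => ?_
  simpa using hW _ (mem_map_negSnd.mp hw)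

lemma finrank_add_finrank_le_of_dotProduct_nonpos (W₁ W₂ : Submodule ℝ ((ι → ℝ) × (ι → ℝ)))
    (horth : ∀ v ∈ W₁, ∀ w ∈ W₂, v.1 ⬝ᵥ w.2 + w.1 ⬝ᵥ v.2 = 0)
    (h₁ : ∀ v ∈ W₁, v.1 ⬝ᵥ v.2 ≤ 0) (h₂ : ∀ w ∈ W₂, w ≠ 0 → w.1 ⬝ᵥ w.2 < 0) :
    finrank ℝ W₁ + finrank ℝ W₂ ≤ Fintype.card ι := by
  rw [← LinearEquiv.finrank_map_eq (negSnd ι) W₁, ← LinearEquiv.finrank_map_eq (negSnd ι) W₂]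
  refine finrank_add_finrank_le_of_dotProduct_nonneg _ _ (fun v hv w hw => ?_)
    (fun v hv => ?_) (fun w hw hw0 => ?_)
  · have := horth _ (mem_map_negSnd.mp hv) _ (mem_map_negSnd.mp hw)
    simp only [dotProduct_neg] at this ⊢
    linarith
  · simpa using h₁ _ (mem_map_negSnd.mp hv)
  · simpa using h₂ _ (mem_map_negSnd.mp hw) (by simpa [Prod.ext_iff] using hw0)

end DualPairing

section LinearRelation

variable {ι κ : Type*} (A B : Matrix κ ι ℝ)

section

variable [Fintype ι]

def linearRelationGraph : Submodule ℝ ((ι → ℝ) × (ι → ℝ)) :=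
  LinearMap.ker (A.mulVecLin.coprod B.mulVecLin)

lemma mem_linearRelationGraph {q : (ι → ℝ) × (ι → ℝ)} :
    q ∈ linearRelationGraph A B ↔ A *ᵥ q.1 + B *ᵥ q.2 = 0 :=
  Iff.rfl

end

section

variable [Fintype κ]

def graphPolarMap : (κ → ℝ) →ₗ[ℝ] (ι → ℝ) × (ι → ℝ) :=
  Bᵀ.mulVecLin.prod Aᵀ.mulVecLin

@[simp]
lemma graphPolarMap_apply (u : κ → ℝ) : graphPolarMap A B u = (Bᵀ *ᵥ u, Aᵀ *ᵥ u) :=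
  rfl

end

variable [Fintype ι] [Fintype κ]

lemma finrank_linearRelationGraph_add_card (hrank : (fromCols A B).rank = Fintype.card κ) :
    finrank ℝ (linearRelationGraph A B) + Fintype.card κ = 2 * Fintype.card ι := by
  have hF : A.mulVecLin.coprod B.mulVecLin =
      (fromCols A B).mulVecLin ∘ₗ
        (LinearEquiv.sumArrowLequivProdArrow ι ι ℝ ℝ).symm.toLinearMap :=
    LinearMap.ext fun x => (fromCols_mulVec_sumElim A B x.1 x.2).symm
  have := LinearMap.finrank_range_add_finrank_ker (A.mulVecLin.coprod B.mulVecLin)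
  rw [hF, LinearMap.range_comp_of_range_eq_top _ (LinearEquiv.range _), ← rank, hrank, ← hF]
    at this
  simp only [finrank_prod, finrank_fintype_fun_eq_card] at this
  rw [linearRelationGraph]
  omega

lemma injective_graphPolarMap (hrank : (fromCols A B).rank = Fintype.card κ) :
    Function.Injective (graphPolarMap A B) := by
  have hker : LinearMap.ker (fromCols A B)ᵀ.mulVecLin = ⊥ := by
    have := LinearMap.finrank_range_add_finrank_ker (fromCols A B)ᵀ.mulVecLin
    rw [← rank, rank_transpose, hrank, finrank_fintype_fun_eq_card] at this
    exact Submodule.finrank_eq_zero.mp (by omega)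
  refine (injective_iff_map_eq_zero _).mpr fun u hu => ?_
  rw [graphPolarMap_apply, Prod.mk_eq_zero] at hu
  have hu' : (fromCols A B)ᵀ *ᵥ u = 0 := by
    rw [transpose_fromCols, fromRows_mulVec, hu.1, hu.2, Sum.elim_zero_zero]
  rw [← Submodule.mem_bot ℝ, ← hker]
  exact hu'

lemma dotProduct_graphPolarMap_add {q : (ι → ℝ) × (ι → ℝ)} (hq : q ∈ linearRelationGraph A B)
    (u : κ → ℝ) : q.1 ⬝ᵥ (graphPolarMap A B u).2 + (graphPolarMap A B u).1 ⬝ᵥ q.2 = 0 := by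
  simp only [graphPolarMap_apply]
  rw [dotProduct_comm (Bᵀ *ᵥ u), dotProduct_mulVec, dotProduct_mulVec, vecMul_transpose,
    vecMul_transpose, ← add_dotProduct, (mem_linearRelationGraph A B).mp hq, zero_dotProduct]

lemma two_mul_dotProduct_graphPolarMap (u : κ → ℝ) :
    2 * ((graphPolarMap A B u).1 ⬝ᵥ (graphPolarMap A B u).2) =
      u ⬝ᵥ (B * Aᵀ + (B * Aᵀ)ᵀ) *ᵥ u := by
  simp only [graphPolarMap_apply]
  rw [transpose_mul, transpose_transpose, add_mulVec, dotProduct_add,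
    ← mulVec_mulVec, ← mulVec_mulVec, dotProduct_mulVec u B, dotProduct_mulVec u A,
    ← mulVec_transpose, ← mulVec_transpose, dotProduct_comm (Aᵀ *ᵥ u)]
  ring

variable {A B}

lemma finrank_add_card_le_of_forall_dotProduct_nonneg
    (hrank : (fromCols A B).rank = Fintype.card κ)
    (hK : ∀ v ∈ linearRelationGraph A B, 0 ≤ v.1 ⬝ᵥ v.2) {P : Submodule ℝ (κ → ℝ)}
    (hP : ∀ u ∈ P, u ≠ 0 → 0 < u ⬝ᵥ (B * Aᵀ + (B * Aᵀ)ᵀ) *ᵥ u) :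
    finrank ℝ P + Fintype.card ι ≤ Fintype.card κ := by
  have h := finrank_add_finrank_le_of_dotProduct_nonneg _ (P.map (graphPolarMap A B))
    (by rintro v hv _ ⟨u, -, rfl⟩; exact dotProduct_graphPolarMap_add A B hv u) hK
    (by
      rintro _ ⟨u, hu, rfl⟩ hu0
      have := hP u hu (by rintro rfl; simp at hu0)
      linarith [two_mul_dotProduct_graphPolarMap A B u])
  rw [← (Submodule.equivMapOfInjective _ (injective_graphPolarMap A B hrank) P).finrank_eq] at h
  linarith [finrank_linearRelationGraph_add_card A B hrank]

lemma finrank_le_card_of_forall_dotProduct_nonpos (hrank : (fromCols A B).rank = Fintype.card κ)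
    {N : Submodule ℝ (κ → ℝ)} (hN : ∀ u ∈ N, u ⬝ᵥ (B * Aᵀ + (B * Aᵀ)ᵀ) *ᵥ u ≤ 0) :
    finrank ℝ N ≤ Fintype.card ι := by
  rw [(Submodule.equivMapOfInjective _ (injective_graphPolarMap A B hrank) N).finrank_eq]
  refine finrank_le_of_forall_dotProduct_nonpos _ ?_
  rintro _ ⟨u, hu, rfl⟩
  linarith [hN u hu, two_mul_dotProduct_graphPolarMap A B u]

lemma forall_dotProduct_nonneg_of_card_le_finrank (hrank : (fromCols A B).rank = Fintype.card κ)
    {N : Submodule ℝ (κ → ℝ)} (hN : ∀ u ∈ N, u ⬝ᵥ (B * Aᵀ + (B * Aᵀ)ᵀ) *ᵥ u ≤ 0)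
    (hdim : Fintype.card ι ≤ finrank ℝ N) :
    ∀ v ∈ linearRelationGraph A B, 0 ≤ v.1 ⬝ᵥ v.2 := by
  intro v hv
  by_contra! hneg
  have hv0 : v ≠ 0 := by rintro rfl; simp at hneg
  have h := finrank_add_finrank_le_of_dotProduct_nonpos (N.map (graphPolarMap A B)) (ℝ ∙ v)
    (by
      rintro _ ⟨u, -, rfl⟩ w hw
      rw [add_comm]
      exact dotProduct_graphPolarMap_add A B
        ((Submodule.span_singleton_le_iff_mem _ _).mpr hv hw) u)
    (by
      rintro _ ⟨u, hu, rfl⟩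
      linarith [hN u hu, two_mul_dotProduct_graphPolarMap A B u])
    (by
      intro w hw hw0
      obtain ⟨t, rfl⟩ := Submodule.mem_span_singleton.mp hw
      have ht : t ≠ 0 := by rintro rfl; simp at hw0
      have : (t • v).1 ⬝ᵥ (t • v).2 = t ^ 2 * (v.1 ⬝ᵥ v.2) := by
        simp only [Prod.smul_fst, Prod.smul_snd, smul_dotProduct, dotProduct_smul, smul_eq_mul]
        ring
      rw [this]
      exact mul_neg_of_pos_of_neg (by positivity) hneg)
  rw [← (Submodule.equivMapOfInjective _ (injective_graphPolarMap A B hrank) N).finrank_eq,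
    finrank_span_singleton hv0] at h
  omega

end LinearRelation

lemma isMonotoneSet_iff_forall_dotProduct_nonneg {n : ℕ}
    (S : Submodule ℝ ((Fin n → ℝ) × (Fin n → ℝ))) :
    IsMonotoneSet (S : Set ((Fin n → ℝ) × (Fin n → ℝ))) ↔ ∀ v ∈ S, 0 ≤ v.1 ⬝ᵥ v.2 :=
  ⟨fun h v hv => by simpa using h v hv 0 S.zero_mem,
    fun h a ha b hb => h (a - b) (S.sub_mem ha hb)⟩

/-- `G` is monotone iff `ABᵀ + BAᵀ` has exactly `p − n` positive
eigenvalues counted with multiplicity, i.e. `dim V₊(BAᵀ) = p − n`. -/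
theorem stmt10 {n p : ℕ} (A B : Matrix (Fin p) (Fin n) ℝ)
    (hrank : (Matrix.fromCols A B).rank = p) :
    IsMonotoneSet {q : (Fin n → ℝ) × (Fin n → ℝ) | A *ᵥ q.1 + B *ᵥ q.2 = 0} ↔
      Module.finrank ℝ (Vpos (B * Aᵀ)) + n = p := by
  have hC : (B * Aᵀ + (B * Aᵀ)ᵀ).IsHermitian :=
    isHermitian_iff_isSymm.mpr (isSymm_add_transpose_self _)
  have hrank' : (fromCols A B).rank = Fintype.card (Fin p) := by rwa [Fintype.card_fin]
  set N := ⨆ μ : {t : ℝ // ¬ 0 < t}, eigenspace (B * Aᵀ + (B * Aᵀ)ᵀ).mulVecLin μ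
  have hN : ∀ u ∈ N, u ⬝ᵥ (B * Aᵀ + (B * Aᵀ)ᵀ) *ᵥ u ≤ 0 := fun u hu =>
    hC.dotProduct_mulVec_nonpos_of_mem_iSup_eigenspace hu
  have hcover : p ≤ finrank ℝ (Vpos (B * Aᵀ)) + finrank ℝ N := by
    have := Submodule.finrank_add_le_finrank_add_finrank (Vpos (B * Aᵀ)) N
    rwa [Vpos, hC.iSup_eigenspace_sup_iSup_eigenspace_not, finrank_top,
      finrank_fintype_fun_eq_card, Fintype.card_fin] at this
  have hN_le := finrank_le_card_of_forall_dotProduct_nonpos hrank' hN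
  rw [Fintype.card_fin] at hN_le
  change IsMonotoneSet (linearRelationGraph A B : Set ((Fin n → ℝ) × (Fin n → ℝ))) ↔ _
  rw [isMonotoneSet_iff_forall_dotProduct_nonneg]
  constructor
  · intro hK
    have := finrank_add_card_le_of_forall_dotProduct_nonneg hrank' hK (P := Vpos (B * Aᵀ))
      fun u hu hu0 => hC.dotProduct_mulVec_pos_of_mem_iSup_eigenspace hu hu0
    simp only [Fintype.card_fin] at this
    omega
  · intro hdim
    exact forall_dotProduct_nonneg_of_card_le_finrank hrank' hN (by rw [Fintype.card_fin]; omega)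
end

section
/- Let n, p ∈ ℕ, let A, B ∈ ℝ^{p×n}, assume the p×2n matrix (A B) has rank p, and let G be the linear relation with graph gra G = {(x,x*) ∈ ℝⁿ × ℝⁿ : Ax + Bx* = 0}. Define the linear relation Ĝ by gra Ĝ = {(Bᵀu, −Aᵀu) : u ∈ V₋(BAᵀ) + V₀(BAᵀ)}. Then G is monotone if and only if Ĝ is maximally monotone. -/
open Matrix Pointwise

/-!
The form `z ↦ z.1 ⬝ᵥ z.2` on `ℝⁿ × ℝⁿ` has signature `(n, n)`, so a subspace on which it is
semidefinite has dimension at most `n`, and a monotone subspace is maximally monotone exactly when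
its dimension is `n`. `gra Ĝ` is the injective image of `W = V₋(BAᵀ) + V₀(BAᵀ)` under
`u ↦ (Bᵀu, -Aᵀu)`, where the form equals `-(u ⬝ᵥ BAᵀu) ≥ 0`; so `Ĝ` is always monotone, and is
maximal iff `dim W = n`.

On the other side, `gra G` has dimension `2n - p` and is orthogonal, for the polar form, to the
injective image of `ℝᵖ` under `u ↦ (Bᵀu, Aᵀu)`, where the form equals `u ⬝ᵥ BAᵀu`. If `G` is
monotone, adding the image of `V₊` keeps the form nonnegative, so `2n - p + dim V₊ ≤ n`, i.e.
`dim W ≥ n`. Conversely, if `dim W = n`, a `z ∈ gra G` with `z.1 ⬝ᵥ z.2 < 0` would span, together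
with the image of `W`, an `(n + 1)`-dimensional subspace on which the form is nonpositive.
-/

open Module Submodule

section Pairing

variable {n : ℕ}

/-- The polar form of the quadratic form `z ↦ z.1 ⬝ᵥ z.2` on `ℝⁿ × ℝⁿ`. -/
def pairingForm (n : ℕ) : LinearMap.BilinForm ℝ ((Fin n → ℝ) × (Fin n → ℝ)) :=
  LinearMap.mk₂ ℝ (fun a b => a.1 ⬝ᵥ b.2 + b.1 ⬝ᵥ a.2)
    (by intros; simp only [Prod.fst_add, Prod.snd_add, add_dotProduct, dotProduct_add]; ring)
    (by intros; simp only [Prod.smul_fst, Prod.smul_snd, smul_dotProduct, dotProduct_smul]; ring)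
    (by intros; simp only [Prod.fst_add, Prod.snd_add, add_dotProduct, dotProduct_add]; ring)
    (by intros; simp only [Prod.smul_fst, Prod.smul_snd, smul_dotProduct, dotProduct_smul]; ring)

@[simp]
lemma pairingForm_apply (a b : (Fin n → ℝ) × (Fin n → ℝ)) :
    pairingForm n a b = a.1 ⬝ᵥ b.2 + b.1 ⬝ᵥ a.2 :=
  LinearMap.mk₂_apply ..

lemma pairingForm_comm (a b : (Fin n → ℝ) × (Fin n → ℝ)) :
    pairingForm n a b = pairingForm n b a := by
  simp only [pairingForm_apply, add_comm]

lemma pairingForm_self (z : (Fin n → ℝ) × (Fin n → ℝ)) :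
    pairingForm n z z = 2 * (z.1 ⬝ᵥ z.2) := by
  rw [pairingForm_apply]; ring

lemma dotProduct_fst_snd_add (a b : (Fin n → ℝ) × (Fin n → ℝ)) :
    (a + b).1 ⬝ᵥ (a + b).2 = a.1 ⬝ᵥ a.2 + b.1 ⬝ᵥ b.2 + pairingForm n a b := by
  rw [pairingForm_apply, Prod.fst_add, Prod.snd_add, add_dotProduct, dotProduct_add,
    dotProduct_add, dotProduct_comm b.1 a.2]
  ring

lemma dotProduct_fst_snd_sub (a b : (Fin n → ℝ) × (Fin n → ℝ)) :
    (a - b).1 ⬝ᵥ (a - b).2 = a.1 ⬝ᵥ a.2 + b.1 ⬝ᵥ b.2 - pairingForm n a b := by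
  rw [sub_eq_add_neg, dotProduct_fst_snd_add, pairingForm_apply, pairingForm_apply]
  simp only [Prod.fst_neg, Prod.snd_neg, neg_dotProduct, dotProduct_neg, neg_neg]
  ring

lemma dotProduct_fst_snd_smul (t : ℝ) (z : (Fin n → ℝ) × (Fin n → ℝ)) :
    (t • z).1 ⬝ᵥ (t • z).2 = t ^ 2 * (z.1 ⬝ᵥ z.2) := by
  rw [Prod.smul_fst, Prod.smul_snd, smul_dotProduct, dotProduct_smul, smul_eq_mul, smul_eq_mul]
  ring

/-- `S` meets the `n`-dimensional graph of `x ↦ ε • x`, on which `ε * (z.1 ⬝ᵥ z.2)` is positive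
definite. -/
lemma exists_mul_dotProduct_pos_of_lt_finrank {ε : ℝ} (hε : ε ≠ 0)
    {S : Submodule ℝ ((Fin n → ℝ) × (Fin n → ℝ))} (hS : n < finrank ℝ S) :
    ∃ z ∈ S, 0 < ε * (z.1 ⬝ᵥ z.2) := by
  set g : (Fin n → ℝ) →ₗ[ℝ] (Fin n → ℝ) × (Fin n → ℝ) := LinearMap.id.prod (ε • LinearMap.id)
  have hg : Function.Injective g := fun x y h => congrArg Prod.fst h
  have hdim : finrank ℝ ((Fin n → ℝ) × (Fin n → ℝ)) <
      finrank ℝ S + finrank ℝ (LinearMap.range g) := by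
    rw [LinearMap.finrank_range_of_inj hg, finrank_prod, finrank_fin_fun]
    omega
  obtain ⟨z, hzS, hzg, hz0⟩ : ∃ z ∈ S, z ∈ LinearMap.range g ∧ z ≠ 0 := by
    by_contra! h
    exact hdim.not_ge (finrank_add_finrank_le_of_disjoint (disjoint_def.mpr h))
  obtain ⟨x, rfl⟩ := hzg
  refine ⟨g x, hzS, ?_⟩
  have hx : x ≠ 0 := by rintro rfl; exact hz0 (map_zero g)
  have : (g x).1 ⬝ᵥ (g x).2 = ε * (x ⬝ᵥ x) := by
    simp [g, dotProduct_smul]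
  rw [this, ← mul_assoc]
  exact mul_pos (mul_self_pos.mpr hε) (by simpa using dotProduct_self_star_pos_iff.mpr hx)

end Pairing

section Monotone

variable {n : ℕ}

lemma finrank_le_of_forall_mul_dotProduct_nonneg {ε : ℝ} (hε : ε ≠ 0)
    {S : Submodule ℝ ((Fin n → ℝ) × (Fin n → ℝ))} (hS : ∀ z ∈ S, 0 ≤ ε * (z.1 ⬝ᵥ z.2)) :
    finrank ℝ S ≤ n := by
  by_contra! h
  obtain ⟨z, hzS, hz⟩ := exists_mul_dotProduct_pos_of_lt_finrank (neg_ne_zero.mpr hε) h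
  linarith [hS z hzS]

lemma finrank_le_of_forall_dotProduct_nonneg_s11 {S : Submodule ℝ ((Fin n → ℝ) × (Fin n → ℝ))}
    (hS : ∀ z ∈ S, 0 ≤ z.1 ⬝ᵥ z.2) : finrank ℝ S ≤ n :=
  finrank_le_of_forall_mul_dotProduct_nonneg one_ne_zero (by simpa using hS)

/-- `S ⊔ S'` is nonnegative for `ε * (z.1 ⬝ᵥ z.2)`, and `S ⊓ S' = ⊥` because
`pairingForm n z z = 2 * (z.1 ⬝ᵥ z.2)`. -/
lemma finrank_add_finrank_le_of_orthogonal {ε : ℝ} (hε : ε ≠ 0)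
    {S S' : Submodule ℝ ((Fin n → ℝ) × (Fin n → ℝ))} (hS : ∀ z ∈ S, 0 ≤ ε * (z.1 ⬝ᵥ z.2))
    (hS' : ∀ z ∈ S', z ≠ 0 → 0 < ε * (z.1 ⬝ᵥ z.2))
    (horth : ∀ a ∈ S, ∀ b ∈ S', pairingForm n a b = 0) :
    finrank ℝ S + finrank ℝ S' ≤ n := by
  have hS'nonneg : ∀ b ∈ S', 0 ≤ ε * (b.1 ⬝ᵥ b.2) := fun b hb => by
    rcases eq_or_ne b 0 with rfl | hb0
    · simp
    · exact (hS' b hb hb0).le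
  have hsup : ∀ z ∈ S ⊔ S', 0 ≤ ε * (z.1 ⬝ᵥ z.2) := by
    intro z hz
    obtain ⟨a, ha, b, hb, rfl⟩ := mem_sup.mp hz
    rw [dotProduct_fst_snd_add, horth a ha b hb, add_zero, mul_add]
    exact add_nonneg (hS a ha) (hS'nonneg b hb)
  have hinf : S ⊓ S' = ⊥ := by
    refine eq_bot_iff.mpr fun z hz => (mem_bot ℝ).mpr ?_
    by_contra hz0
    have hzz := horth z hz.1 z hz.2
    rw [pairingForm_self, mul_eq_zero, or_iff_right two_ne_zero] at hzz
    simpa [hzz] using hS' z hz.2 hz0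
  have := finrank_sup_add_finrank_inf_eq S S'
  rw [hinf, finrank_bot] at this
  linarith [finrank_le_of_forall_mul_dotProduct_nonneg hε hsup]

lemma isMonotoneSet_coe_iff (S : Submodule ℝ ((Fin n → ℝ) × (Fin n → ℝ))) :
    IsMonotoneSet (S : Set ((Fin n → ℝ) × (Fin n → ℝ))) ↔ ∀ z ∈ S, 0 ≤ z.1 ⬝ᵥ z.2 :=
  ⟨fun h z hz => by simpa using h z hz 0 S.zero_mem,
    fun h a ha b hb => h (a - b) (S.sub_mem ha hb)⟩

/-- `s + t • a = t • (a - (-t⁻¹) • s)`. -/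
lemma forall_mem_sup_span_dotProduct_nonneg {S : Submodule ℝ ((Fin n → ℝ) × (Fin n → ℝ))}
    (hS : ∀ z ∈ S, 0 ≤ z.1 ⬝ᵥ z.2) {a : (Fin n → ℝ) × (Fin n → ℝ)}
    (ha : ∀ b ∈ S, 0 ≤ (a.1 - b.1) ⬝ᵥ (a.2 - b.2)) :
    ∀ z ∈ S ⊔ span ℝ {a}, 0 ≤ z.1 ⬝ᵥ z.2 := by
  intro z hz
  obtain ⟨s, hs, w, hw, rfl⟩ := mem_sup.mp hz
  obtain ⟨t, rfl⟩ := mem_span_singleton.mp hw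
  rcases eq_or_ne t 0 with rfl | ht
  · simpa using hS s hs
  · have hrel := ha (-t⁻¹ • s) (S.smul_mem _ hs)
    have : s + t • a = t • (a - (-t⁻¹) • s) := by
      rw [smul_sub, smul_smul, mul_neg, mul_inv_cancel₀ ht, neg_one_smul, sub_neg_eq_add,
        add_comm]
    rw [this, dotProduct_fst_snd_smul]
    exact mul_nonneg (sq_nonneg t) hrel

/-- If `S` is too small, its `pairingForm`-orthogonal complement has dimension `> n`, hence
contains some `z` with `0 < z.1 ⬝ᵥ z.2`; such a `z` is monotonically related to `S` without lying
in it. -/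
lemma isMaxMonotoneSet_coe_iff (S : Submodule ℝ ((Fin n → ℝ) × (Fin n → ℝ))) :
    IsMaxMonotoneSet (S : Set ((Fin n → ℝ) × (Fin n → ℝ))) ↔
      (∀ z ∈ S, 0 ≤ z.1 ⬝ᵥ z.2) ∧ finrank ℝ S = n := by
  rw [IsMaxMonotoneSet, isMonotoneSet_coe_iff]
  refine and_congr_right fun hS => ⟨fun hmax => ?_, fun hdim a ha => ?_⟩
  · refine le_antisymm (finrank_le_of_forall_dotProduct_nonneg_s11 hS) (not_lt.mp fun hlt => ?_)
    have horth := (pairingForm n).finrank_add_finrank_orthogonal' S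
    rw [finrank_prod, finrank_fin_fun] at horth
    obtain ⟨z, hzorth, hz⟩ := exists_mul_dotProduct_pos_of_lt_finrank one_ne_zero
      (S := (pairingForm n).orthogonal S) (by omega)
    rw [one_mul] at hz
    have hzS : z ∈ S := hmax z fun b hb => by
      have hbz : pairingForm n z b = 0 := (pairingForm_comm z b).trans (hzorth b hb)
      have := dotProduct_fst_snd_sub z b
      rw [hbz, sub_zero] at this
      rw [← Prod.fst_sub, ← Prod.snd_sub, this]
      linarith [hS b hb]
    have : pairingForm n z z = 0 := hzorth z hzS
    rw [pairingForm_self] at this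
    linarith
  · have hsup := finrank_le_of_forall_dotProduct_nonneg_s11
      (forall_mem_sup_span_dotProduct_nonneg hS ha)
    have heq : S = S ⊔ span ℝ {a} := eq_of_le_of_finrank_le le_sup_left (hdim.symm ▸ hsup)
    exact heq ▸ mem_sup_right (mem_span_singleton_self a)

end Monotone

section Eigenspaces

variable {ι : Type*} [Fintype ι] {Q : Matrix ι ι ℝ}

lemma mem_eigenspace_mulVecLin_iff {μ : ℝ} {u : ι → ℝ} :
    u ∈ End.eigenspace Q.mulVecLin μ ↔ Q *ᵥ u = μ • u := by
  rw [End.mem_eigenspace_iff, mulVecLin_apply]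

lemma Matrix.IsSymm.dotProduct_eq_zero_of_mem_eigenspace_s11 (hQ : Q.IsSymm) {μ ν : ℝ} (hμν : μ ≠ ν)
    {u w : ι → ℝ} (hu : u ∈ End.eigenspace Q.mulVecLin μ)
    (hw : w ∈ End.eigenspace Q.mulVecLin ν) : u ⬝ᵥ w = 0 := by
  rw [mem_eigenspace_mulVecLin_iff] at hu hw
  have h : μ * (u ⬝ᵥ w) = ν * (u ⬝ᵥ w) := by
    rw [← smul_eq_mul, ← smul_dotProduct, ← hu, ← smul_eq_mul, ← dotProduct_smul, ← hw,
      ← dotProduct_transpose_mulVec, hQ.eq, dotProduct_comm]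
  exact (mul_eq_mul_right_iff.mp h).resolve_left hμν

lemma Matrix.IsSymm.exists_dotProduct_mulVec_eq_sum_s11 (hQ : Q.IsSymm) {P : ℝ → Prop} {u : ι → ℝ}
    (hu : u ∈ ⨆ μ : {t : ℝ // P t}, End.eigenspace Q.mulVecLin (μ : ℝ)) :
    ∃ f : {t : ℝ // P t} →₀ (ι → ℝ),
      (∀ μ, f μ ∈ End.eigenspace Q.mulVecLin μ.1) ∧ f.sum (fun _ v => v) = u ∧
      u ⬝ᵥ Q *ᵥ u = ∑ μ ∈ f.support, μ.1 * (f μ ⬝ᵥ f μ) := by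
  obtain ⟨f, hf, rfl⟩ := (mem_iSup_iff_exists_finsupp _ u).mp hu
  refine ⟨f, hf, rfl, ?_⟩
  simp only [Finsupp.sum, mulVec_sum, sum_dotProduct, dotProduct_sum]
  refine Finset.sum_congr rfl fun μ hμ => ?_
  rw [Finset.sum_eq_single μ]
  · rw [mem_eigenspace_mulVecLin_iff.mp (hf μ), dotProduct_smul, smul_eq_mul]
  · intro ν _ hνμ
    rw [mem_eigenspace_mulVecLin_iff.mp (hf μ), dotProduct_smul,
      hQ.dotProduct_eq_zero_of_mem_eigenspace_s11 (fun h => hνμ (Subtype.ext h)) (hf ν) (hf μ),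
      smul_zero]
  · exact fun h => absurd hμ h

lemma Matrix.IsSymm.dotProduct_mulVec_nonpos (hQ : Q.IsSymm) {u : ι → ℝ}
    (hu : u ∈ ⨆ μ : {t : ℝ // t ≤ 0}, End.eigenspace Q.mulVecLin (μ : ℝ)) :
    u ⬝ᵥ Q *ᵥ u ≤ 0 := by
  obtain ⟨f, -, -, hquad⟩ := hQ.exists_dotProduct_mulVec_eq_sum_s11 hu
  rw [hquad]
  exact Finset.sum_nonpos fun μ _ =>
    mul_nonpos_of_nonpos_of_nonneg μ.2 (Finset.sum_nonneg fun _ _ => mul_self_nonneg _)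

lemma Matrix.IsSymm.dotProduct_mulVec_pos (hQ : Q.IsSymm) {u : ι → ℝ}
    (hu : u ∈ ⨆ μ : {t : ℝ // 0 < t}, End.eigenspace Q.mulVecLin (μ : ℝ)) (hu0 : u ≠ 0) :
    0 < u ⬝ᵥ Q *ᵥ u := by
  obtain ⟨f, -, hsum, hquad⟩ := hQ.exists_dotProduct_mulVec_eq_sum_s11 hu
  rw [hquad]
  refine Finset.sum_pos (fun μ hμ => mul_pos μ.2 ?_) ?_
  · simpa using dotProduct_self_star_pos_iff.mpr (Finsupp.mem_support_iff.mp hμ)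
  · refine Finset.nonempty_iff_ne_empty.mpr fun h => hu0 ?_
    rw [← hsum, Finsupp.sum, h, Finset.sum_empty]

variable [DecidableEq ι]

lemma Matrix.IsSymm.iSup_eigenspace_mulVecLin_eq_top (hQ : Q.IsSymm) :
    ⨆ μ : ℝ, End.eigenspace Q.mulVecLin μ = ⊤ := by
  have hQ' : Q.IsHermitian := by
    rw [IsHermitian, conjTranspose_eq_transpose_of_trivial, hQ.eq]
  let b := hQ'.eigenvectorBasis.toBasis.map (WithLp.linearEquiv 2 ℝ (ι → ℝ))
  rw [eq_top_iff, ← b.span_eq, span_le]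
  rintro _ ⟨j, rfl⟩
  refine mem_iSup_of_mem (hQ'.eigenvalues j) (mem_eigenspace_mulVecLin_iff.mpr ?_)
  simpa [b] using hQ'.mulVec_eigenvectorBasis j

end Eigenspaces

section SignSubspaces

variable {m : ℕ} {M : Matrix (Fin m) (Fin m) ℝ}

lemma Vneg_sup_Vzero_eq_iSup (M : Matrix (Fin m) (Fin m) ℝ) :
    Vneg M ⊔ Vzero M = ⨆ μ : {t : ℝ // t ≤ 0}, End.eigenspace (M + Mᵀ).mulVecLin (μ : ℝ) := by
  refine le_antisymm (sup_le (iSup_le fun μ => le_iSup_of_le ⟨μ, μ.2.le⟩ le_rfl)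
    (le_iSup_of_le ⟨0, le_rfl⟩ le_rfl)) (iSup_le fun μ => ?_)
  rcases μ.2.lt_or_eq with h | h
  · exact le_sup_of_le_left (le_iSup_of_le ⟨μ, h⟩ le_rfl)
  · exact le_sup_of_le_right (le_of_eq (congrArg _ h))

lemma dotProduct_add_transpose_mulVec (u : Fin m → ℝ) :
    u ⬝ᵥ (M + Mᵀ) *ᵥ u = 2 * (u ⬝ᵥ M *ᵥ u) := by
  rw [add_mulVec, dotProduct_add, dotProduct_transpose_mulVec]
  ring

lemma dotProduct_mulVec_nonpos_of_mem_Vneg_sup_Vzero {u : Fin m → ℝ}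
    (hu : u ∈ Vneg M ⊔ Vzero M) : u ⬝ᵥ M *ᵥ u ≤ 0 := by
  rw [Vneg_sup_Vzero_eq_iSup] at hu
  have := (isSymm_add_transpose_self M).dotProduct_mulVec_nonpos hu
  rw [dotProduct_add_transpose_mulVec] at this
  linarith

lemma dotProduct_mulVec_pos_of_mem_Vpos {u : Fin m → ℝ} (hu : u ∈ Vpos M) (hu0 : u ≠ 0) :
    0 < u ⬝ᵥ M *ᵥ u := by
  have := (isSymm_add_transpose_self M).dotProduct_mulVec_pos hu hu0
  rw [dotProduct_add_transpose_mulVec] at this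
  linarith

lemma finrank_Vpos_add_finrank_Vneg_sup_Vzero (M : Matrix (Fin m) (Fin m) ℝ) :
    finrank ℝ (Vpos M) + finrank ℝ ↥(Vneg M ⊔ Vzero M) = m := by
  have hdisj : Disjoint (Vpos M) (Vneg M ⊔ Vzero M) := disjoint_def.mpr fun u hpos hnonpos => by
    by_contra hu0
    exact (dotProduct_mulVec_nonpos_of_mem_Vneg_sup_Vzero hnonpos).not_gt
      (dotProduct_mulVec_pos_of_mem_Vpos hpos hu0)
  have htop : Vpos M ⊔ (Vneg M ⊔ Vzero M) = ⊤ := by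
    rw [eq_top_iff, ← (isSymm_add_transpose_self M).iSup_eigenspace_mulVecLin_eq_top]
    refine iSup_le fun μ => ?_
    rcases lt_trichotomy μ 0 with h | rfl | h
    · exact le_sup_of_le_right (le_sup_of_le_left (le_iSup_of_le ⟨μ, h⟩ le_rfl))
    · exact le_sup_of_le_right le_sup_right
    · exact le_sup_of_le_left (le_iSup_of_le ⟨μ, h⟩ le_rfl)
  have := finrank_sup_add_finrank_inf_eq (Vpos M) (Vneg M ⊔ Vzero M)
  rwa [htop, hdisj.eq_bot, finrank_bot, finrank_top, finrank_fin_fun, add_zero, eq_comm] at this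

end SignSubspaces

lemma finrank_map_of_injective {R M N : Type*} [Ring R] [StrongRankCondition R]
    [AddCommGroup M] [Module R M] [AddCommGroup N] [Module R N] {f : M →ₗ[R] N}
    (hf : Function.Injective f) (U : Submodule R M) :
    finrank R (U.map f) = finrank R U :=
  (U.equivMapOfInjective f hf).finrank_eq.symm

section LinearRelation

variable {n p : ℕ} (A B : Matrix (Fin p) (Fin n) ℝ)

def constraintMap : (Fin n → ℝ) × (Fin n → ℝ) →ₗ[ℝ] Fin p → ℝ :=
  A.mulVecLin ∘ₗ LinearMap.fst ℝ _ _ + B.mulVecLin ∘ₗ LinearMap.snd ℝ _ _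

def hatMap : (Fin p → ℝ) →ₗ[ℝ] (Fin n → ℝ) × (Fin n → ℝ) :=
  Bᵀ.mulVecLin.prod (-Aᵀ.mulVecLin)

def orthMap : (Fin p → ℝ) →ₗ[ℝ] (Fin n → ℝ) × (Fin n → ℝ) :=
  Bᵀ.mulVecLin.prod Aᵀ.mulVecLin

@[simp]
lemma constraintMap_apply (z : (Fin n → ℝ) × (Fin n → ℝ)) :
    constraintMap A B z = A *ᵥ z.1 + B *ᵥ z.2 :=
  rfl

@[simp]
lemma hatMap_apply (u : Fin p → ℝ) : hatMap A B u = (Bᵀ *ᵥ u, -(Aᵀ *ᵥ u)) :=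
  rfl

@[simp]
lemma orthMap_apply (u : Fin p → ℝ) : orthMap A B u = (Bᵀ *ᵥ u, Aᵀ *ᵥ u) :=
  rfl

lemma pairingForm_orthMap (z : (Fin n → ℝ) × (Fin n → ℝ)) (u : Fin p → ℝ) :
    pairingForm n z (orthMap A B u) = u ⬝ᵥ constraintMap A B z := by
  rw [pairingForm_apply, orthMap_apply, constraintMap_apply, dotProduct_add,
    dotProduct_transpose_mulVec, dotProduct_comm (Bᵀ *ᵥ u), dotProduct_transpose_mulVec]

lemma dotProduct_orthMap (u : Fin p → ℝ) :
    (orthMap A B u).1 ⬝ᵥ (orthMap A B u).2 = u ⬝ᵥ (B * Aᵀ) *ᵥ u := by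
  rw [orthMap_apply, dotProduct_comm, dotProduct_transpose_mulVec, mulVec_mulVec]

lemma dotProduct_hatMap (u : Fin p → ℝ) :
    (hatMap A B u).1 ⬝ᵥ (hatMap A B u).2 = -(u ⬝ᵥ (B * Aᵀ) *ᵥ u) := by
  rw [hatMap_apply, dotProduct_neg, dotProduct_comm, dotProduct_transpose_mulVec, mulVec_mulVec]

variable {A B}

lemma constraintMap_surjective (hrank : (fromCols A B).rank = p) :
    Function.Surjective (constraintMap A B) := by
  intro y
  have htop : LinearMap.range (fromCols A B).mulVecLin = ⊤ :=
    eq_top_of_finrank_eq (by rw [finrank_fin_fun]; exact hrank)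
  obtain ⟨x, hx⟩ := LinearMap.range_eq_top.mp htop y
  refine ⟨(x ∘ Sum.inl, x ∘ Sum.inr), ?_⟩
  rw [constraintMap_apply, ← fromCols_mulVec_sumElim, Sum.elim_comp_inl_inr, ← hx,
    mulVecLin_apply]

lemma eq_zero_of_transpose_mulVec_eq_zero (hrank : (fromCols A B).rank = p) {u : Fin p → ℝ}
    (hA : Aᵀ *ᵥ u = 0) (hB : Bᵀ *ᵥ u = 0) : u = 0 := by
  obtain ⟨z, hz⟩ := constraintMap_surjective hrank u
  have : u ⬝ᵥ constraintMap A B z = 0 := by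
    rw [← pairingForm_orthMap, orthMap_apply, hA, hB, pairingForm_apply, zero_dotProduct,
      dotProduct_zero, add_zero]
  rwa [hz, dotProduct_self_eq_zero] at this

lemma hatMap_injective (hrank : (fromCols A B).rank = p) : Function.Injective (hatMap A B) :=
  (injective_iff_map_eq_zero _).mpr fun u hu => by
    rw [hatMap_apply, Prod.mk_eq_zero, neg_eq_zero] at hu
    exact eq_zero_of_transpose_mulVec_eq_zero hrank hu.2 hu.1

lemma orthMap_injective (hrank : (fromCols A B).rank = p) : Function.Injective (orthMap A B) :=
  (injective_iff_map_eq_zero _).mpr fun u hu => by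
    rw [orthMap_apply, Prod.mk_eq_zero] at hu
    exact eq_zero_of_transpose_mulVec_eq_zero hrank hu.2 hu.1

lemma finrank_ker_constraintMap_add (hrank : (fromCols A B).rank = p) :
    finrank ℝ (LinearMap.ker (constraintMap A B)) + p = n + n := by
  have := LinearMap.finrank_range_add_finrank_ker (constraintMap A B)
  rw [LinearMap.range_eq_top.mpr (constraintMap_surjective hrank), finrank_top, finrank_prod,
    finrank_fin_fun, finrank_fin_fun] at this
  omega

end LinearRelation

section Signs

variable {n p : ℕ} {A B : Matrix (Fin p) (Fin n) ℝ}

lemma dotProduct_nonneg_of_mem_map_hatMap {z : (Fin n → ℝ) × (Fin n → ℝ)}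
    (hz : z ∈ (Vneg (B * Aᵀ) ⊔ Vzero (B * Aᵀ)).map (hatMap A B)) : 0 ≤ z.1 ⬝ᵥ z.2 := by
  obtain ⟨u, hu, rfl⟩ := mem_map.mp hz
  rw [dotProduct_hatMap, neg_nonneg]
  exact dotProduct_mulVec_nonpos_of_mem_Vneg_sup_Vzero hu

lemma le_finrank_Vneg_sup_Vzero (hrank : (fromCols A B).rank = p)
    (hG : ∀ z ∈ LinearMap.ker (constraintMap A B), 0 ≤ z.1 ⬝ᵥ z.2) :
    n ≤ finrank ℝ ↥(Vneg (B * Aᵀ) ⊔ Vzero (B * Aᵀ)) := by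
  have := finrank_add_finrank_le_of_orthogonal one_ne_zero
    (S := LinearMap.ker (constraintMap A B)) (S' := (Vpos (B * Aᵀ)).map (orthMap A B))
    (by simpa using hG)
    (fun z hz hz0 => by
      obtain ⟨u, hu, rfl⟩ := mem_map.mp hz
      rw [one_mul, dotProduct_orthMap]
      exact dotProduct_mulVec_pos_of_mem_Vpos hu (by rintro rfl; exact hz0 (map_zero _)))
    (fun a ha b hb => by
      obtain ⟨u, -, rfl⟩ := mem_map.mp hb
      rw [pairingForm_orthMap, LinearMap.mem_ker.mp ha, dotProduct_zero])
  rw [finrank_map_of_injective (orthMap_injective hrank)] at this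
  have := finrank_Vpos_add_finrank_Vneg_sup_Vzero (B * Aᵀ)
  have := finrank_ker_constraintMap_add hrank
  omega

lemma forall_mem_ker_constraintMap_dotProduct_nonneg (hrank : (fromCols A B).rank = p)
    (hW : n ≤ finrank ℝ ↥(Vneg (B * Aᵀ) ⊔ Vzero (B * Aᵀ))) :
    ∀ z ∈ LinearMap.ker (constraintMap A B), 0 ≤ z.1 ⬝ᵥ z.2 := by
  intro z hz
  by_contra! hneg
  have hz0 : z ≠ 0 := by rintro rfl; simp at hneg
  have := finrank_add_finrank_le_of_orthogonal (neg_ne_zero.mpr one_ne_zero)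
    (S := (Vneg (B * Aᵀ) ⊔ Vzero (B * Aᵀ)).map (orthMap A B)) (S' := span ℝ {z})
    (fun w hw => by
      obtain ⟨u, hu, rfl⟩ := mem_map.mp hw
      rw [dotProduct_orthMap, neg_one_mul, neg_nonneg]
      exact dotProduct_mulVec_nonpos_of_mem_Vneg_sup_Vzero hu)
    (fun w hw hw0 => by
      obtain ⟨t, rfl⟩ := mem_span_singleton.mp hw
      have ht : t ≠ 0 := by rintro rfl; exact hw0 (zero_smul ℝ z)
      rw [dotProduct_fst_snd_smul, neg_one_mul, neg_pos]
      exact mul_neg_of_pos_of_neg (by positivity) hneg)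
    (fun a ha b hb => by
      obtain ⟨u, -, rfl⟩ := mem_map.mp ha
      obtain ⟨t, rfl⟩ := mem_span_singleton.mp hb
      rw [pairingForm_comm, pairingForm_orthMap, map_smul, LinearMap.mem_ker.mp hz, smul_zero,
        dotProduct_zero])
  rw [finrank_map_of_injective (orthMap_injective hrank), finrank_span_singleton hz0] at this
  omega

end Signs

/-- `G` is monotone iff
`Ĝ = {(Bᵀu, −Aᵀu) : u ∈ V₋(BAᵀ) + V₀(BAᵀ)}` is maximally monotone. -/
theorem stmt11 {n p : ℕ} (A B : Matrix (Fin p) (Fin n) ℝ)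
    (hrank : (Matrix.fromCols A B).rank = p) :
    IsMonotoneSet {q : (Fin n → ℝ) × (Fin n → ℝ) | A *ᵥ q.1 + B *ᵥ q.2 = 0} ↔
      IsMaxMonotoneSet ((fun u => (Bᵀ *ᵥ u, -(Aᵀ *ᵥ u))) ''
        ↑(Vneg (B * Aᵀ) ⊔ Vzero (B * Aᵀ))) := by
  have hG : {q : (Fin n → ℝ) × (Fin n → ℝ) | A *ᵥ q.1 + B *ᵥ q.2 = 0} =
      LinearMap.ker (constraintMap A B) := rfl
  have hĜ : (fun u => (Bᵀ *ᵥ u, -(Aᵀ *ᵥ u))) '' ↑(Vneg (B * Aᵀ) ⊔ Vzero (B * Aᵀ)) =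
      (Vneg (B * Aᵀ) ⊔ Vzero (B * Aᵀ)).map (hatMap A B) := (map_coe (hatMap A B) _).symm
  have hĜmono : ∀ z ∈ (Vneg (B * Aᵀ) ⊔ Vzero (B * Aᵀ)).map (hatMap A B), 0 ≤ z.1 ⬝ᵥ z.2 :=
    fun _ => dotProduct_nonneg_of_mem_map_hatMap
  have hdim := finrank_le_of_forall_dotProduct_nonneg_s11 hĜmono
  rw [finrank_map_of_injective (hatMap_injective hrank)] at hdim
  rw [hG, hĜ, isMonotoneSet_coe_iff, isMaxMonotoneSet_coe_iff,
    finrank_map_of_injective (hatMap_injective hrank)]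
  exact ⟨fun hmono => ⟨hĜmono, hdim.antisymm (le_finrank_Vneg_sup_Vzero hrank hmono)⟩,
    fun hmax => forall_mem_ker_constraintMap_dotProduct_nonneg hrank hmax.2.ge⟩
end

section
/- Let n, p ∈ ℕ, let A, B ∈ ℝ^{p×n}, assume the p×2n matrix (A B) has rank p, let G be the linear relation with graph gra G = {(x,x*) ∈ ℝⁿ × ℝⁿ : Ax + Bx* = 0}, and assume G is monotone. Then a linear relation G̃ with gra G ⊆ gra G̃ is maximally monotone if and only if there exists M ∈ ℝ^{p×p} with rank M = n such that the matrix Mᵀ(ABᵀ + BAᵀ)M is negative semidefinite and gra G̃ = {(x,x*) ∈ ℝⁿ × ℝⁿ : Mᵀ(Ax + Bx*) = 0}. -/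
open Matrix Pointwise

/-!
A linear relation `L ⊆ ℝⁿ × ℝⁿ` is maximally monotone iff `q(x, x*) = ⟨x, x*⟩` is nonnegative
on `L` and `dim L = n`: a subspace on which `q` is nonnegative (or nonpositive) has dimension
at most `n`, because `(x, x*) ↦ x ± x*` is injective on it, while a point monotonically related
to `L` spans together with `L` another nonnegative subspace.

Put `φ(x, x*) = Ax + Bx*`, surjective by the rank hypothesis, and `τ u = (Bᵀu, Aᵀu)`. Then
`⟨u, φ z⟩` is the polar form of `q` at `(τ u, z)` and `⟨u, (ABᵀ + BAᵀ)u⟩ = 2 q(τ u)`.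
If `G̃ ⊇ ker φ` is maximal, then `G̃ = ker (K φ)` for any `K` with `ker K = φ(G̃)`, and
`M = Kᵀ` works: a point of `τ(range M)` is polar-orthogonal to `G̃`, so if `q` were positive
there it would extend `G̃`. Conversely, if `G̃ = ker (Mᵀ φ)`, then `dim G̃ = 2n - rank M = n`
and `G̃` is polar-orthogonal to the `n`-dimensional subspace `τ(range M)` on which `q ≤ 0`;
a point of `G̃` with `q < 0` would enlarge that subspace beyond dimension `n`.
-/

open Module

namespace LinearRelation

lemma dotProduct_self_nonneg {ι : Type*} [Fintype ι] (v : ι → ℝ) : 0 ≤ v ⬝ᵥ v := by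
  simpa using dotProduct_self_star_nonneg v

lemma eq_zero_of_dotProduct_self_nonpos {ι : Type*} [Fintype ι] {v : ι → ℝ} (h : v ⬝ᵥ v ≤ 0) :
    v = 0 :=
  dotProduct_self_eq_zero.mp (h.antisymm (dotProduct_self_nonneg v))

lemma exists_ne_zero_forall_dotProduct_eq_zero {K ι : Type*} [Field K] [Fintype ι] [DecidableEq ι]
    {U : Submodule K (ι → K)} (hU : U < ⊤) :
    ∃ c ≠ 0, ∀ u ∈ U, u ⬝ᵥ c = 0 := by
  obtain ⟨f, hf, hUf⟩ := U.exists_le_ker_of_lt_top hU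
  refine ⟨(dotProductEquiv K ι).symm f, by simpa using hf, fun u hu => ?_⟩
  rw [dotProduct_comm, ← dotProductEquiv_apply_apply, LinearEquiv.apply_symm_apply]
  exact hUf hu

lemma exists_ker_mulVecLin_eq {K ι : Type*} [Field K] [Fintype ι] [DecidableEq ι]
    (N : Submodule K (ι → K)) : ∃ M : Matrix ι ι K, LinearMap.ker M.mulVecLin = N := by
  obtain ⟨C, hC⟩ := N.exists_isCompl
  refine ⟨LinearMap.toMatrix' (C.subtype ∘ₗ C.projectionOnto N hC.symm), ?_⟩
  rw [← Matrix.toLin'_apply', Matrix.toLin'_toMatrix',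
    LinearMap.ker_comp_of_ker_eq_bot _ C.ker_subtype, Submodule.ker_projectionOnto]

lemma posSemidef_neg_transpose_mul_mul_iff {ι κ : Type*} [Fintype ι] [Fintype κ]
    {S : Matrix κ κ ℝ} (hS : S.IsSymm) (M : Matrix κ ι ℝ) :
    (-(Mᵀ * S * M)).PosSemidef ↔ ∀ v, (M *ᵥ v) ⬝ᵥ (S *ᵥ (M *ᵥ v)) ≤ 0 := by
  have hherm : (-(Mᵀ * S * M)).IsHermitian := by
    simp [IsHermitian, conjTranspose_eq_transpose_of_trivial, transpose_mul, hS.eq,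
      Matrix.mul_assoc]
  rw [posSemidef_iff_dotProduct_mulVec, and_iff_right hherm]
  refine forall_congr' fun v => ?_
  rw [star_trivial, neg_mulVec, dotProduct_neg, neg_nonneg, ← mulVec_mulVec, ← mulVec_mulVec,
    dotProduct_transpose_mulVec, dotProduct_comm]

lemma finrank_le_of_disjoint_ker {V W : Type*} [AddCommGroup V] [Module ℝ V] [AddCommGroup W]
    [Module ℝ W] [FiniteDimensional ℝ W] {L : Submodule ℝ V} (f : V →ₗ[ℝ] W)
    (hf : Disjoint L (LinearMap.ker f)) : finrank ℝ L ≤ finrank ℝ W :=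
  LinearMap.finrank_le_finrank_of_injective (LinearMap.injective_domRestrict_iff.mpr hf)

section MonotoneSubspace

variable {n : ℕ}

lemma add_fst_dotProduct_add_snd (w z : (Fin n → ℝ) × (Fin n → ℝ)) :
    (w + z).1 ⬝ᵥ (w + z).2 = w.1 ⬝ᵥ w.2 + (w.1 ⬝ᵥ z.2 + z.1 ⬝ᵥ w.2) + z.1 ⬝ᵥ z.2 := by
  simp only [Prod.fst_add, Prod.snd_add, add_dotProduct, dotProduct_add]
  ring

lemma sub_fst_dotProduct_sub_snd (w z : (Fin n → ℝ) × (Fin n → ℝ)) :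
    (w.1 - z.1) ⬝ᵥ (w.2 - z.2) = w.1 ⬝ᵥ w.2 - (w.1 ⬝ᵥ z.2 + z.1 ⬝ᵥ w.2) + z.1 ⬝ᵥ z.2 := by
  simp only [sub_dotProduct, dotProduct_sub]
  ring

lemma smul_fst_dotProduct_smul_snd (t : ℝ) (w : (Fin n → ℝ) × (Fin n → ℝ)) :
    (t • w).1 ⬝ᵥ (t • w).2 = t ^ 2 * (w.1 ⬝ᵥ w.2) := by
  simp only [Prod.smul_fst, Prod.smul_snd, smul_dotProduct, dotProduct_smul, smul_eq_mul]
  ring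

lemma finrank_le_of_forall_nonneg (L : Submodule ℝ ((Fin n → ℝ) × (Fin n → ℝ)))
    (hL : ∀ z ∈ L, 0 ≤ z.1 ⬝ᵥ z.2) : finrank ℝ L ≤ n := by
  refine (finrank_le_of_disjoint_ker (LinearMap.fst ℝ _ _ + LinearMap.snd ℝ _ _)
    (Submodule.disjoint_def.mpr fun z hz hsum => ?_)).trans_eq (finrank_fin_fun ℝ)
  have h2 : z.2 = -z.1 := eq_neg_of_add_eq_zero_right hsum
  have h1 : z.1 = 0 := eq_zero_of_dotProduct_self_nonpos (by simpa [h2] using hL z hz)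
  ext : 1 <;> simp [h1, h2]

lemma finrank_le_of_forall_nonpos (L : Submodule ℝ ((Fin n → ℝ) × (Fin n → ℝ)))
    (hL : ∀ z ∈ L, z.1 ⬝ᵥ z.2 ≤ 0) : finrank ℝ L ≤ n := by
  refine (finrank_le_of_disjoint_ker (LinearMap.fst ℝ _ _ - LinearMap.snd ℝ _ _)
    (Submodule.disjoint_def.mpr fun z hz hdiff => ?_)).trans_eq (finrank_fin_fun ℝ)
  have h2 : z.2 = z.1 := (sub_eq_zero.mp hdiff).symm
  have h1 : z.1 = 0 := eq_zero_of_dotProduct_self_nonpos (by simpa [h2] using hL z hz)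
  ext : 1 <;> simp [h1, h2]

lemma isMonotoneSet_iff (L : Submodule ℝ ((Fin n → ℝ) × (Fin n → ℝ))) :
    IsMonotoneSet (L : Set ((Fin n → ℝ) × (Fin n → ℝ))) ↔ ∀ z ∈ L, 0 ≤ z.1 ⬝ᵥ z.2 :=
  ⟨fun h z hz => by simpa using h z hz 0 L.zero_mem,
    fun h a ha b hb => h (a - b) (L.sub_mem ha hb)⟩

lemma mem_of_forall_nonneg_of_le_finrank {L : Submodule ℝ ((Fin n → ℝ) × (Fin n → ℝ))}
    (hL : ∀ z ∈ L, 0 ≤ z.1 ⬝ᵥ z.2) (hdim : n ≤ finrank ℝ L) {a : (Fin n → ℝ) × (Fin n → ℝ)}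
    (ha : ∀ z ∈ L, 0 ≤ (a.1 - z.1) ⬝ᵥ (a.2 - z.2)) : a ∈ L := by
  by_contra haL
  have hsup : ∀ w ∈ L ⊔ ℝ ∙ a, 0 ≤ w.1 ⬝ᵥ w.2 := by
    intro w hw
    obtain ⟨z, hz, y, hy, rfl⟩ := Submodule.mem_sup.mp hw
    obtain ⟨t, rfl⟩ := Submodule.mem_span_singleton.mp hy
    rcases eq_or_ne t 0 with rfl | ht
    · simpa using hL z hz
    · have hw : z + t • a = t • (a - (-t⁻¹) • z) := by
        rw [smul_sub, smul_smul, mul_neg, mul_inv_cancel₀ ht, neg_one_smul, sub_neg_eq_add,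
          add_comm]
      rw [hw, smul_fst_dotProduct_smul_snd]
      exact mul_nonneg (sq_nonneg t) (ha _ (L.smul_mem _ hz))
  have hlt : L < L ⊔ ℝ ∙ a :=
    left_lt_sup.mpr fun h => haL (h (Submodule.mem_span_singleton_self a))
  have := Submodule.finrank_lt_finrank_of_lt hlt
  have := finrank_le_of_forall_nonneg _ hsup
  omega

lemma le_finrank_of_isMaxMonotoneSet {L : Submodule ℝ ((Fin n → ℝ) × (Fin n → ℝ))}
    (hL : IsMaxMonotoneSet (L : Set ((Fin n → ℝ) × (Fin n → ℝ)))) : n ≤ finrank ℝ L := by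
  by_contra! hlt
  set U := L.map (LinearMap.fst ℝ (Fin n → ℝ) (Fin n → ℝ) + LinearMap.snd ℝ _ _)
  have hU : U < ⊤ := by
    refine Submodule.lt_top_of_finrank_lt_finrank ?_
    calc finrank ℝ U ≤ finrank ℝ L := Submodule.finrank_map_le _ _
      _ < finrank ℝ (Fin n → ℝ) := by simpa using hlt
  obtain ⟨c, hc, hUc⟩ := exists_ne_zero_forall_dotProduct_eq_zero hU
  -- `(c, c)` is monotonically related to `L` since `c ⟂ x + x*` for all `(x, x*) ∈ L`
  have hcL : (c, c) ∈ L := hL.2 (c, c) fun z hz => by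
    have hcz : c ⬝ᵥ z.2 + z.1 ⬝ᵥ c = 0 := by
      rw [dotProduct_comm, ← add_dotProduct, add_comm]
      exact hUc _ ⟨z, hz, rfl⟩
    have := sub_fst_dotProduct_sub_snd (c, c) z
    linarith [(isMonotoneSet_iff L).mp hL.1 z hz, dotProduct_self_nonneg c]
  have hcc : (c + c) ⬝ᵥ c = 0 := hUc _ ⟨(c, c), hcL, rfl⟩
  exact hc (eq_zero_of_dotProduct_self_nonpos (by rw [add_dotProduct] at hcc; linarith))

theorem isMaxMonotoneSet_iff (L : Submodule ℝ ((Fin n → ℝ) × (Fin n → ℝ))) :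
    IsMaxMonotoneSet (L : Set ((Fin n → ℝ) × (Fin n → ℝ))) ↔
      (∀ z ∈ L, 0 ≤ z.1 ⬝ᵥ z.2) ∧ finrank ℝ L = n := by
  refine ⟨fun h => ?_, fun ⟨hL, hdim⟩ => ?_⟩
  · have hL := (isMonotoneSet_iff L).mp h.1
    exact ⟨hL, (finrank_le_of_forall_nonneg L hL).antisymm (le_finrank_of_isMaxMonotoneSet h)⟩
  · exact ⟨(isMonotoneSet_iff L).mpr hL,
      fun a ha => mem_of_forall_nonneg_of_le_finrank hL hdim.ge ha⟩

lemma fst_dotProduct_snd_nonpos_of_isMaxMonotoneSet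
    {L : Submodule ℝ ((Fin n → ℝ) × (Fin n → ℝ))}
    (hL : IsMaxMonotoneSet (L : Set ((Fin n → ℝ) × (Fin n → ℝ)))) {w : (Fin n → ℝ) × (Fin n → ℝ)}
    (hw : ∀ z ∈ L, w.1 ⬝ᵥ z.2 + z.1 ⬝ᵥ w.2 = 0) : w.1 ⬝ᵥ w.2 ≤ 0 := by
  by_contra! hpos
  have hwL : w ∈ L := hL.2 w fun z hz => by
    have := sub_fst_dotProduct_sub_snd w z
    linarith [hw z hz, (isMonotoneSet_iff L).mp hL.1 z hz]
  linarith [hw w hwL]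

lemma fst_dotProduct_snd_nonneg_of_le_finrank {R : Submodule ℝ ((Fin n → ℝ) × (Fin n → ℝ))}
    (hR : ∀ r ∈ R, r.1 ⬝ᵥ r.2 ≤ 0) (hdim : n ≤ finrank ℝ R) {z : (Fin n → ℝ) × (Fin n → ℝ)}
    (hz : ∀ r ∈ R, r.1 ⬝ᵥ z.2 + z.1 ⬝ᵥ r.2 = 0) : 0 ≤ z.1 ⬝ᵥ z.2 := by
  by_contra! hneg
  have hzR : z ∉ R := fun hzR => by linarith [hz z hzR]
  have hsup : ∀ w ∈ R ⊔ ℝ ∙ z, w.1 ⬝ᵥ w.2 ≤ 0 := by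
    intro w hw
    obtain ⟨r, hr, y, hy, rfl⟩ := Submodule.mem_sup.mp hw
    obtain ⟨t, rfl⟩ := Submodule.mem_span_singleton.mp hy
    have hcross : r.1 ⬝ᵥ (t • z).2 + (t • z).1 ⬝ᵥ r.2 = 0 := by
      simp only [Prod.smul_fst, Prod.smul_snd, dotProduct_smul, smul_dotProduct, smul_eq_mul]
      rw [← mul_add, hz r hr, mul_zero]
    rw [add_fst_dotProduct_add_snd, hcross, smul_fst_dotProduct_smul_snd]
    nlinarith [hR r hr, sq_nonneg t]
  have hlt : R < R ⊔ ℝ ∙ z :=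
    left_lt_sup.mpr fun h => hzR (h (Submodule.mem_span_singleton_self z))
  have := Submodule.finrank_lt_finrank_of_lt hlt
  have := finrank_le_of_forall_nonpos _ hsup
  omega

end MonotoneSubspace

section Constraint

variable {n p : ℕ} (A B : Matrix (Fin p) (Fin n) ℝ)

def constraintMap : ((Fin n → ℝ) × (Fin n → ℝ)) →ₗ[ℝ] Fin p → ℝ :=
  A.mulVecLin ∘ₗ LinearMap.fst ℝ _ _ + B.mulVecLin ∘ₗ LinearMap.snd ℝ _ _

@[simp]
lemma constraintMap_apply (z : (Fin n → ℝ) × (Fin n → ℝ)) :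
    constraintMap A B z = A *ᵥ z.1 + B *ᵥ z.2 :=
  rfl

def constraintAdjoint : (Fin p → ℝ) →ₗ[ℝ] (Fin n → ℝ) × (Fin n → ℝ) :=
  Bᵀ.mulVecLin.prod Aᵀ.mulVecLin

@[simp]
lemma constraintAdjoint_apply (u : Fin p → ℝ) : constraintAdjoint A B u = (Bᵀ *ᵥ u, Aᵀ *ᵥ u) :=
  rfl

lemma dotProduct_constraintMap (u : Fin p → ℝ) (z : (Fin n → ℝ) × (Fin n → ℝ)) :
    u ⬝ᵥ constraintMap A B z =
      (constraintAdjoint A B u).1 ⬝ᵥ z.2 + z.1 ⬝ᵥ (constraintAdjoint A B u).2 := by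
  simp only [constraintMap_apply, constraintAdjoint_apply, dotProduct_add, dotProduct_mulVec,
    mulVec_transpose, dotProduct_comm z.1]
  ring

lemma dotProduct_mulVec_eq_two_mul (u : Fin p → ℝ) :
    u ⬝ᵥ ((A * Bᵀ + B * Aᵀ) *ᵥ u) =
      2 * ((constraintAdjoint A B u).1 ⬝ᵥ (constraintAdjoint A B u).2) := by
  have : (A * Bᵀ + B * Aᵀ) *ᵥ u = constraintMap A B (constraintAdjoint A B u) := by
    simp [add_mulVec, mulVec_mulVec]
  rw [this, dotProduct_constraintMap, dotProduct_comm (constraintAdjoint A B u).1]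
  ring

lemma constraintMap_surjective (h : (fromCols A B).rank = p) :
    Function.Surjective (constraintMap A B) := by
  intro y
  have htop : LinearMap.range (fromCols A B).mulVecLin = ⊤ :=
    Submodule.eq_top_of_finrank_eq (by rw [finrank_fin_fun]; exact h)
  obtain ⟨x, hx⟩ : y ∈ LinearMap.range (fromCols A B).mulVecLin := htop ▸ Submodule.mem_top
  refine ⟨(x ∘ Sum.inl, x ∘ Sum.inr), ?_⟩
  rw [constraintMap_apply, ← fromCols_mulVec_sumElim, Sum.elim_comp_inl_inr]
  exact hx

lemma constraintAdjoint_injective (h : Function.Surjective (constraintMap A B)) :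
    Function.Injective (constraintAdjoint A B) := by
  rw [← LinearMap.ker_eq_bot, LinearMap.ker_eq_bot']
  intro u hu
  obtain ⟨z, rfl⟩ := h u
  refine eq_zero_of_dotProduct_self_nonpos (le_of_eq ?_)
  rw [dotProduct_constraintMap, hu]
  simp

lemma finrank_ker_comp_constraintMap_add_rank (h : Function.Surjective (constraintMap A B))
    (K : Matrix (Fin p) (Fin p) ℝ) :
    finrank ℝ (LinearMap.ker (K.mulVecLin ∘ₗ constraintMap A B)) + K.rank = n + n := by
  have := LinearMap.finrank_range_add_finrank_ker (K.mulVecLin ∘ₗ constraintMap A B)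
  rw [LinearMap.range_comp_of_range_eq_top _ (LinearMap.range_eq_top.mpr h), finrank_prod,
    finrank_fin_fun] at this
  rw [Matrix.rank]
  omega

lemma isSymm_mul_transpose_add_mul_transpose : (A * Bᵀ + B * Aᵀ).IsSymm := by
  rw [IsSymm, transpose_add, transpose_mul, transpose_mul, transpose_transpose, transpose_transpose,
    add_comm]

lemma exists_matrix_of_isMaxMonotoneSet (h : Function.Surjective (constraintMap A B))
    {L : Submodule ℝ ((Fin n → ℝ) × (Fin n → ℝ))} (hker : LinearMap.ker (constraintMap A B) ≤ L)
    (hL : IsMaxMonotoneSet (L : Set ((Fin n → ℝ) × (Fin n → ℝ)))) :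
    ∃ M : Matrix (Fin p) (Fin p) ℝ, M.rank = n ∧ (-(Mᵀ * (A * Bᵀ + B * Aᵀ) * M)).PosSemidef ∧
      L = LinearMap.ker (Mᵀ.mulVecLin ∘ₗ constraintMap A B) := by
  obtain ⟨K, hK⟩ := exists_ker_mulVecLin_eq (L.map (constraintMap A B))
  have hLK : L = LinearMap.ker (K.mulVecLin ∘ₗ constraintMap A B) := by
    rw [LinearMap.ker_comp, hK, Submodule.comap_map_eq, sup_eq_left.mpr hker]
  refine ⟨Kᵀ, ?_, ?_, by rwa [transpose_transpose]⟩
  · have := finrank_ker_comp_constraintMap_add_rank A B h K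
    rw [← hLK, ((isMaxMonotoneSet_iff L).mp hL).2] at this
    rw [rank_transpose]
    omega
  · refine (posSemidef_neg_transpose_mul_mul_iff (isSymm_mul_transpose_add_mul_transpose A B) _).mpr
      fun v => ?_
    rw [dotProduct_mulVec_eq_two_mul]
    have := fst_dotProduct_snd_nonpos_of_isMaxMonotoneSet hL
        (w := constraintAdjoint A B (Kᵀ *ᵥ v)) fun z hz => by
      rw [hLK] at hz
      rw [← dotProduct_constraintMap, dotProduct_comm, dotProduct_transpose_mulVec,
        show K *ᵥ constraintMap A B z = 0 from hz, dotProduct_zero]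
    linarith

lemma isMaxMonotoneSet_ker (h : Function.Surjective (constraintMap A B))
    {M : Matrix (Fin p) (Fin p) ℝ} (hM : M.rank = n)
    (hMAB : (-(Mᵀ * (A * Bᵀ + B * Aᵀ) * M)).PosSemidef) :
    IsMaxMonotoneSet
      (LinearMap.ker (Mᵀ.mulVecLin ∘ₗ constraintMap A B) : Set ((Fin n → ℝ) × (Fin n → ℝ))) := by
  have hdim := finrank_ker_comp_constraintMap_add_rank A B h Mᵀ
  rw [rank_transpose, hM] at hdim
  refine (isMaxMonotoneSet_iff _).mpr ⟨fun z hz => ?_, by omega⟩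
  let R := (LinearMap.range M.mulVecLin).map (constraintAdjoint A B)
  refine fst_dotProduct_snd_nonneg_of_le_finrank (R := R) ?_ ?_ ?_
  · rintro _ ⟨_, ⟨v, rfl⟩, rfl⟩
    have := (posSemidef_neg_transpose_mul_mul_iff
      (isSymm_mul_transpose_add_mul_transpose A B) M).mp hMAB v
    rw [dotProduct_mulVec_eq_two_mul] at this
    exact nonpos_of_mul_nonpos_right this two_pos
  · rw [← (Submodule.equivMapOfInjective _ (constraintAdjoint_injective A B h) _).finrank_eq]
    exact hM.ge
  · rintro _ ⟨_, ⟨v, rfl⟩, rfl⟩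
    rw [← dotProduct_constraintMap, Matrix.mulVecLin_apply, dotProduct_comm,
      ← dotProduct_transpose_mulVec, show Mᵀ *ᵥ constraintMap A B z = 0 from hz, dotProduct_zero]

end Constraint

end LinearRelation

open LinearRelation in
theorem stmt14_general {n p : ℕ} (A B : Matrix (Fin p) (Fin n) ℝ)
    (hrank : (Matrix.fromCols A B).rank = p)
    (Gt : Submodule ℝ ((Fin n → ℝ) × (Fin n → ℝ)))
    (hext : {q : (Fin n → ℝ) × (Fin n → ℝ) | A *ᵥ q.1 + B *ᵥ q.2 = 0} ⊆
      (Gt : Set ((Fin n → ℝ) × (Fin n → ℝ)))) :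
    IsMaxMonotoneSet (Gt : Set ((Fin n → ℝ) × (Fin n → ℝ))) ↔
      ∃ M : Matrix (Fin p) (Fin p) ℝ, M.rank = n ∧
        (-(Mᵀ * (A * Bᵀ + B * Aᵀ) * M)).PosSemidef ∧
        (Gt : Set ((Fin n → ℝ) × (Fin n → ℝ))) =
          {q : (Fin n → ℝ) × (Fin n → ℝ) | Mᵀ *ᵥ (A *ᵥ q.1 + B *ᵥ q.2) = 0} := by
  have h := constraintMap_surjective A B hrank
  constructor
  · intro hGt
    obtain ⟨M, hM, hMAB, rfl⟩ := exists_matrix_of_isMaxMonotoneSet A B h hext hGt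
    exact ⟨M, hM, hMAB, rfl⟩
  · rintro ⟨M, hM, hMAB, hGt⟩
    rw [hGt]
    exact isMaxMonotoneSet_ker A B h hM hMAB

/-- assuming `G` monotone, a linear relation `G̃ ⊇ G` is maximally
monotone iff there is `M ∈ ℝ^{p×p}` of rank `n` with `Mᵀ(ABᵀ + BAᵀ)M` negative
semidefinite and `gra G̃ = {(x,x*) : Mᵀ(Ax + Bx*) = 0}`. -/
theorem stmt14 {n p : ℕ} (A B : Matrix (Fin p) (Fin n) ℝ)
    (hrank : (Matrix.fromCols A B).rank = p)
    (hmono : IsMonotoneSet {q : (Fin n → ℝ) × (Fin n → ℝ) | A *ᵥ q.1 + B *ᵥ q.2 = 0})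
    (Gt : Submodule ℝ ((Fin n → ℝ) × (Fin n → ℝ)))
    (hext : {q : (Fin n → ℝ) × (Fin n → ℝ) | A *ᵥ q.1 + B *ᵥ q.2 = 0} ⊆
      (Gt : Set ((Fin n → ℝ) × (Fin n → ℝ)))) :
    IsMaxMonotoneSet (Gt : Set ((Fin n → ℝ) × (Fin n → ℝ))) ↔
      ∃ M : Matrix (Fin p) (Fin p) ℝ, M.rank = n ∧
        (-(Mᵀ * (A * Bᵀ + B * Aᵀ) * M)).PosSemidef ∧
        (Gt : Set ((Fin n → ℝ) × (Fin n → ℝ))) =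
          {q : (Fin n → ℝ) × (Fin n → ℝ) | Mᵀ *ᵥ (A *ᵥ q.1 + B *ᵥ q.2) = 0} :=
  stmt14_general A B hrank Gt hext
end

section
/- Let n, p ∈ ℕ, let A, B ∈ ℝ^{p×n}, assume the p×2n matrix (A B) has rank p, and let G be the linear relation with graph gra G = {(x,x*) ∈ ℝⁿ × ℝⁿ : Ax + Bx* = 0}. Then G is monotone if and only if for all y, y* ∈ ℝⁿ with (A + B)y + (B − A)y* = 0 one has ‖y‖² − ‖y*‖² ≥ 0. Consequently, if G is monotone then the p×n matrix B − A has rank n (full column rank). -/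
/-!
The graph of a linear relation is a subspace, so it is monotone iff `⟨x, x*⟩ ≥ 0` on the graph.
The substitution `x = y - y*`, `x* = y + y*` is a bijection of `ℝⁿ × ℝⁿ` turning `⟨x, x*⟩` into
`‖y‖² - ‖y*‖²` and `Ax + Bx* = 0` into `(A + B)y + (B - A)y* = 0`. Taking `y = 0` then shows
`‖y*‖² ≤ 0` whenever `(B - A)y* = 0`, i.e. `B - A` is injective.
-/

open Matrix Pointwise

theorem isMonotoneSet_submodule_iff {n : ℕ} (S : Submodule ℝ ((Fin n → ℝ) × (Fin n → ℝ))) :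
    IsMonotoneSet (S : Set ((Fin n → ℝ) × (Fin n → ℝ))) ↔ ∀ q ∈ S, 0 ≤ q.1 ⬝ᵥ q.2 := by
  refine ⟨fun h q hq => by simpa using h q hq 0 S.zero_mem, fun h a ha b hb => ?_⟩
  exact h (a - b) (S.sub_mem ha hb)

theorem isMonotoneSet_setOf_mulVec_add_mulVec_eq_zero_iff {n p : ℕ}
    (A B : Matrix (Fin p) (Fin n) ℝ) :
    IsMonotoneSet {q : (Fin n → ℝ) × (Fin n → ℝ) | A *ᵥ q.1 + B *ᵥ q.2 = 0} ↔
      ∀ x xs, A *ᵥ x + B *ᵥ xs = 0 → 0 ≤ x ⬝ᵥ xs :=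
  (isMonotoneSet_submodule_iff (LinearMap.ker (A.mulVecLin.coprod B.mulVecLin))).trans
    (by simp)

theorem Matrix.mulVec_sub_add_mulVec_add {m n α : Type*} [Fintype n] [Ring α]
    (A B : Matrix m n α) (y ys : n → α) :
    A *ᵥ (y - ys) + B *ᵥ (y + ys) = (A + B) *ᵥ y + (B - A) *ᵥ ys := by
  simp only [mulVec_sub, mulVec_add, add_mulVec, sub_mulVec]
  abel

theorem Matrix.sub_dotProduct_add {n α : Type*} [Fintype n] [CommRing α] (y ys : n → α) :
    (y - ys) ⬝ᵥ (y + ys) = y ⬝ᵥ y - ys ⬝ᵥ ys := by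
  rw [sub_dotProduct, dotProduct_add, dotProduct_add, dotProduct_comm ys y]
  ring

theorem forall_dotProduct_nonneg_iff_cayley {m n : Type*} [Fintype n] (A B : Matrix m n ℝ) :
    (∀ x xs, A *ᵥ x + B *ᵥ xs = 0 → 0 ≤ x ⬝ᵥ xs) ↔
      ∀ y ys, (A + B) *ᵥ y + (B - A) *ᵥ ys = 0 → 0 ≤ y ⬝ᵥ y - ys ⬝ᵥ ys := by
  constructor
  · intro h y ys hy
    rw [← sub_dotProduct_add]
    exact h _ _ (by rwa [mulVec_sub_add_mulVec_add])
  · intro h x xs hx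
    obtain ⟨y, ys, rfl, rfl⟩ : ∃ y ys : n → ℝ, y - ys = x ∧ y + ys = xs :=
      ⟨(2 : ℝ)⁻¹ • (x + xs), (2 : ℝ)⁻¹ • (xs - x), by module, by module⟩
    rw [sub_dotProduct_add]
    exact h _ _ (by rwa [← mulVec_sub_add_mulVec_add])

theorem Matrix.rank_eq_card_of_injective_mulVec {m n K : Type*} [Fintype n] [Field K]
    {A : Matrix m n K} (h : Function.Injective A.mulVec) : A.rank = Fintype.card n := by
  rw [rank, LinearMap.finrank_range_of_inj h, Module.finrank_fintype_fun_eq_card]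

theorem stmt15_general {n p : ℕ} (A B : Matrix (Fin p) (Fin n) ℝ) :
    (IsMonotoneSet {q : (Fin n → ℝ) × (Fin n → ℝ) | A *ᵥ q.1 + B *ᵥ q.2 = 0} ↔
      ∀ y ys : Fin n → ℝ, (A + B) *ᵥ y + (B - A) *ᵥ ys = 0 →
        0 ≤ y ⬝ᵥ y - ys ⬝ᵥ ys) ∧
    (IsMonotoneSet {q : (Fin n → ℝ) × (Fin n → ℝ) | A *ᵥ q.1 + B *ᵥ q.2 = 0} →
      (B - A).rank = n) := by
  have hiff := (isMonotoneSet_setOf_mulVec_add_mulVec_eq_zero_iff A B).trans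
    (forall_dotProduct_nonneg_iff_cayley A B)
  refine ⟨hiff, fun hmono => ?_⟩
  have hker : ∀ ys, (B - A) *ᵥ ys = 0 → ys = 0 := fun ys hys => by
    have hnonpos : ys ⬝ᵥ ys ≤ 0 := by simpa using hiff.1 hmono 0 ys (by simpa using hys)
    exact dotProduct_self_eq_zero.mp
      (hnonpos.antisymm (Fintype.sum_nonneg fun i => mul_self_nonneg (ys i)))
  simpa using rank_eq_card_of_injective_mulVec
    ((injective_iff_map_eq_zero (B - A).mulVecLin).2 hker)

/-- `G` is monotone iff `‖y‖² − ‖y*‖² ≥ 0` whenever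
`(A + B)y + (B − A)y* = 0`; consequently, if `G` is monotone then `B − A`
has full column rank `n`. -/
theorem stmt15 {n p : ℕ} (A B : Matrix (Fin p) (Fin n) ℝ)
    (hrank : (Matrix.fromCols A B).rank = p) :
    (IsMonotoneSet {q : (Fin n → ℝ) × (Fin n → ℝ) | A *ᵥ q.1 + B *ᵥ q.2 = 0} ↔
      ∀ y ys : Fin n → ℝ, (A + B) *ᵥ y + (B - A) *ᵥ ys = 0 →
        0 ≤ y ⬝ᵥ y - ys ⬝ᵥ ys) ∧
    (IsMonotoneSet {q : (Fin n → ℝ) × (Fin n → ℝ) | A *ᵥ q.1 + B *ᵥ q.2 = 0} →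
      (B - A).rank = n) :=
  stmt15_general A B
end

section
/- Let n, p ∈ ℕ, let A, B ∈ ℝ^{p×n}, assume the p×2n matrix (A B) has rank p, let G be the linear relation with graph gra G = {(x,x*) ∈ ℝⁿ × ℝⁿ : Ax + Bx* = 0}, and assume G is monotone (so that B − A has full column rank and (B−A)ᵀ(B−A) is invertible). Set Q = ((B−A)ᵀ(B−A))⁻¹(B−A)ᵀ(B+A) ∈ ℝ^{n×n}. Then: (a) for every (x,x*) ∈ gra G, writing y = x + x*, one has x = ½(I + Q)y and x* = ½(I − Q)y; and (b) conversely, for every y of the form y = u + u* with (u,u*) ∈ gra G, the pair (½(I + Q)y, ½(I − Q)y) belongs to gra G. -/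
open Matrix Pointwise

/-- The matrix `Q = ((B−A)ᵀ(B−A))⁻¹(B−A)ᵀ(B+A)`. -/
noncomputable def Qmat {n p : ℕ} (A B : Matrix (Fin p) (Fin n) ℝ) :
    Matrix (Fin n) (Fin n) ℝ :=
  ((B - A)ᵀ * (B - A))⁻¹ * (B - A)ᵀ * (B + A)

/-! On the graph `A x + B x* = 0` one has `(B + A)(x + x*) = (B - A)(x - x*)`. Monotonicity forces
`B - A` to be injective (a pair `(v, -v)` in the graph has `-‖v‖² ≥ 0`), so the Moore–Penrose
inverse of `B - A` recovers `x - x* = Q (x + x*)`; adding and subtracting `x + x*` gives (a),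
and (b) is (a) read backwards. -/

section

variable {m : Type*} {n : ℕ} (A B : Matrix m (Fin n) ℝ)

theorem injective_sub_mulVec_of_isMonotoneSet
    (hmono : IsMonotoneSet {q : (Fin n → ℝ) × (Fin n → ℝ) | A *ᵥ q.1 + B *ᵥ q.2 = 0}) :
    Function.Injective (B - A).mulVec := by
  refine (injective_iff_map_eq_zero (B - A).mulVecLin).2 fun v hv => ?_
  have hgraph : A *ᵥ v + B *ᵥ (-v) = 0 := by
    rw [mulVecLin_apply, sub_mulVec] at hv
    rw [mulVec_neg]
    linear_combination (norm := module) -hv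
  have hpair := hmono (v, -v) hgraph 0 (by simp)
  simp only [Prod.fst_zero, Prod.snd_zero, sub_zero, dotProduct_neg, neg_nonneg] at hpair
  exact dotProduct_self_eq_zero.mp (le_antisymm hpair (dotProduct_self_star_nonneg v))

theorem isUnit_transpose_mul_self_sub [Fintype m]
    (hmono : IsMonotoneSet {q : (Fin n → ℝ) × (Fin n → ℝ) | A *ᵥ q.1 + B *ᵥ q.2 = 0}) :
    IsUnit ((B - A)ᵀ * (B - A)) := by
  simpa using
    (PosDef.conjTranspose_mul_self _ (injective_sub_mulVec_of_isMonotoneSet A B hmono)).isUnit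

theorem add_mulVec_add_eq_sub_mulVec_sub {x xs : Fin n → ℝ} (h : A *ᵥ x + B *ᵥ xs = 0) :
    (B + A) *ᵥ (x + xs) = (B - A) *ᵥ (x - xs) := by
  rw [add_mulVec, sub_mulVec, mulVec_add, mulVec_add, mulVec_sub, mulVec_sub]
  linear_combination (norm := module) (2 : ℝ) • h

end

theorem Qmat_mulVec_add {n p : ℕ} {A B : Matrix (Fin p) (Fin n) ℝ}
    (hunit : IsUnit ((B - A)ᵀ * (B - A))) {x xs : Fin n → ℝ} (h : A *ᵥ x + B *ᵥ xs = 0) :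
    Qmat A B *ᵥ (x + xs) = x - xs := by
  have hinv : ((B - A)ᵀ * (B - A))⁻¹ * (B - A)ᵀ * (B - A) = 1 := by
    rw [Matrix.mul_assoc]
    exact nonsing_inv_mul _ ((isUnit_iff_isUnit_det _).mp hunit)
  rw [Qmat, ← mulVec_mulVec, add_mulVec_add_eq_sub_mulVec_sub A B h, mulVec_mulVec, hinv,
    one_mulVec]

theorem stmt16_general {n p : ℕ} (A B : Matrix (Fin p) (Fin n) ℝ)
    (hmono : IsMonotoneSet {q : (Fin n → ℝ) × (Fin n → ℝ) | A *ᵥ q.1 + B *ᵥ q.2 = 0}) :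
    (∀ x xs : Fin n → ℝ, A *ᵥ x + B *ᵥ xs = 0 →
      x = (1 / 2 : ℝ) • ((1 + Qmat A B) *ᵥ (x + xs)) ∧
      xs = (1 / 2 : ℝ) • ((1 - Qmat A B) *ᵥ (x + xs))) ∧
    (∀ u us : Fin n → ℝ, A *ᵥ u + B *ᵥ us = 0 →
      A *ᵥ ((1 / 2 : ℝ) • ((1 + Qmat A B) *ᵥ (u + us))) +
        B *ᵥ ((1 / 2 : ℝ) • ((1 - Qmat A B) *ᵥ (u + us))) = 0) := by
  have hunit := isUnit_transpose_mul_self_sub A B hmono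
  have minty : ∀ x xs : Fin n → ℝ, A *ᵥ x + B *ᵥ xs = 0 →
      x = (1 / 2 : ℝ) • ((1 + Qmat A B) *ᵥ (x + xs)) ∧
      xs = (1 / 2 : ℝ) • ((1 - Qmat A B) *ᵥ (x + xs)) := by
    intro x xs h
    rw [add_mulVec, sub_mulVec, one_mulVec, Qmat_mulVec_add hunit h]
    constructor <;> module
  refine ⟨minty, fun u us h => ?_⟩
  obtain ⟨hu, hus⟩ := minty u us h
  rwa [← hu, ← hus]

/-- Minty parametrization: if `G` is monotone, then every
`(x,x*) ∈ gra G` satisfies `x = ½(I + Q)(x + x*)`, `x* = ½(I − Q)(x + x*)`;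
and conversely the pair `(½(I + Q)y, ½(I − Q)y)` lies in `gra G` for every
`y = u + u*` with `(u,u*) ∈ gra G`. -/
theorem stmt16 {n p : ℕ} (A B : Matrix (Fin p) (Fin n) ℝ)
    (hrank : (Matrix.fromCols A B).rank = p)
    (hmono : IsMonotoneSet {q : (Fin n → ℝ) × (Fin n → ℝ) | A *ᵥ q.1 + B *ᵥ q.2 = 0}) :
    (∀ x xs : Fin n → ℝ, A *ᵥ x + B *ᵥ xs = 0 →
      x = (1 / 2 : ℝ) • ((1 + Qmat A B) *ᵥ (x + xs)) ∧
      xs = (1 / 2 : ℝ) • ((1 - Qmat A B) *ᵥ (x + xs))) ∧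
    (∀ u us : Fin n → ℝ, A *ᵥ u + B *ᵥ us = 0 →
      A *ᵥ ((1 / 2 : ℝ) • ((1 + Qmat A B) *ᵥ (u + us))) +
        B *ᵥ ((1 / 2 : ℝ) • ((1 - Qmat A B) *ᵥ (u + us))) = 0) :=
  stmt16_general A B hmono
end

section
/- Let n ∈ ℕ, let A, B ∈ ℝ^{n×n}, assume the n×2n matrix (A B) has rank n, let G be the linear relation with graph gra G = {(x,x*) ∈ ℝⁿ × ℝⁿ : Ax + Bx* = 0}, and assume G is maximally monotone. Then B − A is invertible and gra G = {((B−A)⁻¹By, −(B−A)⁻¹Ay) : y ∈ ℝⁿ}. Consequently dom G = (B−A)⁻¹(ran B) and ran G = (B−A)⁻¹(ran A). -/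
open Matrix Pointwise

/-
If `(B - A) z = 0` then `(z, -z)` lies in the graph together with `(0, 0)`, and monotonicity
gives `-‖z‖² ≥ 0`, so `B - A` is invertible. Everything else rests on
the identity `A x + B x* = B (x + x*) - (B - A) x = (B - A) x* + A (x + x*)`: a pair lies in the
graph iff `y = x + x*` satisfies `(B - A) x = B y` and `(B - A) x* = -A y`.
-/

section LinearRelation

variable {n : ℕ} (A B : Matrix (Fin n) (Fin n) ℝ)

def linRelGraph : Set ((Fin n → ℝ) × (Fin n → ℝ)) :=
  {q | A *ᵥ q.1 + B *ᵥ q.2 = 0}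

variable {A B}

@[simp]
lemma mem_linRelGraph {q : (Fin n → ℝ) × (Fin n → ℝ)} :
    q ∈ linRelGraph A B ↔ A *ᵥ q.1 + B *ᵥ q.2 = 0 :=
  Iff.rfl

lemma mulVec_add_mulVec_eq_mulVec_add_sub (x xs : Fin n → ℝ) :
    A *ᵥ x + B *ᵥ xs = B *ᵥ (x + xs) - (B - A) *ᵥ x := by
  rw [mulVec_add, sub_mulVec]; abel

lemma mulVec_add_mulVec_eq_sub_mulVec_add (x xs : Fin n → ℝ) :
    A *ᵥ x + B *ᵥ xs = (B - A) *ᵥ xs + A *ᵥ (x + xs) := by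
  rw [mulVec_add, sub_mulVec]; abel

lemma IsMonotoneSet.eq_zero_of_mem_neg {S : Set ((Fin n → ℝ) × (Fin n → ℝ))}
    (hS : IsMonotoneSet S) (h0 : (0, 0) ∈ S) {z : Fin n → ℝ} (hz : (z, -z) ∈ S) : z = 0 := by
  have hneg : 0 ≤ -(z ⬝ᵥ z) := by simpa [neg_dotProduct, dotProduct_neg] using hS _ hz _ h0
  have hnonneg : 0 ≤ z ⬝ᵥ z := Finset.sum_nonneg fun i _ => mul_self_nonneg (z i)
  exact dotProduct_self_eq_zero.mp (by linarith)

lemma isUnit_sub_of_isMonotoneSet (hmono : IsMonotoneSet (linRelGraph A B)) : IsUnit (B - A) := by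
  refine mulVec_injective_iff_isUnit.mp <| (injective_iff_map_eq_zero (B - A).mulVecLin).mpr ?_
  intro z hz
  refine hmono.eq_zero_of_mem_neg (by simp) ?_
  rw [mem_linRelGraph, mulVec_add_mulVec_eq_mulVec_add_sub, add_neg_cancel, mulVec_zero,
    zero_sub, neg_eq_zero]
  exact hz

lemma linRelGraph_eq_range (hBA : IsUnit (B - A)) :
    linRelGraph A B =
      Set.range (fun y : Fin n → ℝ => ((B - A)⁻¹ *ᵥ (B *ᵥ y), -((B - A)⁻¹ *ᵥ (A *ᵥ y)))) := by
  have hinv : (B - A)⁻¹ * (B - A) = 1 := nonsing_inv_mul _ ((isUnit_iff_isUnit_det _).mp hBA)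
  have cancel (v : Fin n → ℝ) : (B - A)⁻¹ *ᵥ ((B - A) *ᵥ v) = v := by
    rw [mulVec_mulVec, hinv, one_mulVec]
  ext ⟨x, xs⟩
  constructor
  · intro h
    have hx : (B - A) *ᵥ x = B *ᵥ (x + xs) :=
      (sub_eq_zero.mp ((mulVec_add_mulVec_eq_mulVec_add_sub x xs).symm.trans h)).symm
    have hxs : (B - A) *ᵥ xs = -(A *ᵥ (x + xs)) :=
      eq_neg_of_add_eq_zero_left ((mulVec_add_mulVec_eq_sub_mulVec_add x xs).symm.trans h)
    refine ⟨x + xs, ?_⟩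
    simp only [← hx, ← neg_eq_iff_eq_neg.mpr hxs, mulVec_neg, neg_neg, cancel]
  · rintro ⟨y, hy⟩
    obtain ⟨rfl, rfl⟩ := Prod.mk.inj hy
    have hsum : (B - A)⁻¹ *ᵥ (B *ᵥ y) + -((B - A)⁻¹ *ᵥ (A *ᵥ y)) = y := by
      rw [← sub_eq_add_neg, ← mulVec_sub, ← sub_mulVec, cancel]
    rw [mem_linRelGraph, mulVec_add_mulVec_eq_mulVec_add_sub, hsum, mulVec_mulVec,
      mul_nonsing_inv _ ((isUnit_iff_isUnit_det _).mp hBA), one_mulVec, sub_self]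

lemma linRel_dom_eq_preimage_range :
    {x : Fin n → ℝ | ∃ xs : Fin n → ℝ, A *ᵥ x + B *ᵥ xs = 0} =
      (fun x => (B - A) *ᵥ x) ⁻¹' Set.range (fun y : Fin n → ℝ => B *ᵥ y) := by
  ext x
  simp only [Set.mem_ofPred_eq, Set.mem_preimage, Set.mem_range]
  constructor
  · rintro ⟨xs, h⟩
    exact ⟨x + xs, sub_eq_zero.mp ((mulVec_add_mulVec_eq_mulVec_add_sub x xs).symm.trans h)⟩
  · rintro ⟨y, hy⟩
    refine ⟨y - x, ?_⟩
    rw [mulVec_add_mulVec_eq_mulVec_add_sub, add_sub_cancel, hy, sub_self]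

lemma linRel_ran_eq_preimage_range :
    {xs : Fin n → ℝ | ∃ x : Fin n → ℝ, A *ᵥ x + B *ᵥ xs = 0} =
      (fun xs => (B - A) *ᵥ xs) ⁻¹' Set.range (fun y : Fin n → ℝ => A *ᵥ y) := by
  ext xs
  simp only [Set.mem_ofPred_eq, Set.mem_preimage, Set.mem_range]
  constructor
  · rintro ⟨x, h⟩
    refine ⟨-(x + xs), ?_⟩
    rw [mulVec_neg, neg_eq_iff_eq_neg]
    exact eq_neg_of_add_eq_zero_right ((mulVec_add_mulVec_eq_sub_mulVec_add x xs).symm.trans h)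
  · rintro ⟨y, hy⟩
    refine ⟨-y - xs, ?_⟩
    rw [mulVec_add_mulVec_eq_sub_mulVec_add, sub_add_cancel, ← hy, mulVec_neg, add_neg_cancel]

end LinearRelation

theorem stmt17_general {n : ℕ} (A B : Matrix (Fin n) (Fin n) ℝ)
    (hmax : IsMaxMonotoneSet
      {q : (Fin n → ℝ) × (Fin n → ℝ) | A *ᵥ q.1 + B *ᵥ q.2 = 0}) :
    IsUnit (B - A) ∧
    {q : (Fin n → ℝ) × (Fin n → ℝ) | A *ᵥ q.1 + B *ᵥ q.2 = 0} =
      Set.range (fun y : Fin n → ℝ =>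
        ((B - A)⁻¹ *ᵥ (B *ᵥ y), -((B - A)⁻¹ *ᵥ (A *ᵥ y)))) ∧
    {x : Fin n → ℝ | ∃ xs : Fin n → ℝ, A *ᵥ x + B *ᵥ xs = 0} =
      (fun x => (B - A) *ᵥ x) ⁻¹' Set.range (fun y : Fin n → ℝ => B *ᵥ y) ∧
    {xs : Fin n → ℝ | ∃ x : Fin n → ℝ, A *ᵥ x + B *ᵥ xs = 0} =
      (fun xs => (B - A) *ᵥ xs) ⁻¹' Set.range (fun y : Fin n → ℝ => A *ᵥ y) := by
  have hBA : IsUnit (B - A) := isUnit_sub_of_isMonotoneSet hmax.1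
  exact ⟨hBA, linRelGraph_eq_range hBA, linRel_dom_eq_preimage_range,
    linRel_ran_eq_preimage_range⟩

/-- if `p = n` and `G` is maximally monotone, then `B − A` is
invertible, `gra G = {((B−A)⁻¹By, −(B−A)⁻¹Ay) : y ∈ ℝⁿ}`,
`dom G = (B−A)⁻¹(ran B)` and `ran G = (B−A)⁻¹(ran A)`. -/
theorem stmt17 {n : ℕ} (A B : Matrix (Fin n) (Fin n) ℝ)
    (hrank : (Matrix.fromCols A B).rank = n)
    (hmax : IsMaxMonotoneSet
      {q : (Fin n → ℝ) × (Fin n → ℝ) | A *ᵥ q.1 + B *ᵥ q.2 = 0}) :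
    IsUnit (B - A) ∧
    {q : (Fin n → ℝ) × (Fin n → ℝ) | A *ᵥ q.1 + B *ᵥ q.2 = 0} =
      Set.range (fun y : Fin n → ℝ =>
        ((B - A)⁻¹ *ᵥ (B *ᵥ y), -((B - A)⁻¹ *ᵥ (A *ᵥ y)))) ∧
    {x : Fin n → ℝ | ∃ xs : Fin n → ℝ, A *ᵥ x + B *ᵥ xs = 0} =
      (fun x => (B - A) *ᵥ x) ⁻¹' Set.range (fun y : Fin n → ℝ => B *ᵥ y) ∧
    {xs : Fin n → ℝ | ∃ x : Fin n → ℝ, A *ᵥ x + B *ᵥ xs = 0} =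
      (fun xs => (B - A) *ᵥ xs) ⁻¹' Set.range (fun y : Fin n → ℝ => A *ᵥ y) :=
  stmt17_general A B hmax
end
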